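/- arXiv:2605.05326 — 13 statements merged into one kernel-verified Lean document; each statement's English description precedes it below -/
import Mathlib

section
/- Let Σ ⊆ M be an achronal set and let a ⊆ Σ. Then ∂_Σ a ⊆ edge(a) ⊆ ∂_Σ a ∪ edge(Σ), where ∂_Σ a denotes the frontier of a in the subspace topology of Σ. (This is the Minkowski-spacetime instance of Proposition 'edge' of the paper.) -/
open Set Metric

noncomputable section

/-- Spatial Euclidean factor. -/
abbrev E (n : ℕ) : Type := EuclideanSpace ℝ (Fin n)

/-- Minkowski spacetime `M = ℝ × E`. -/
abbrev M (n : ℕ) : Type := ℝ × E n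

variable {n : ℕ}

/-- Chronological relation `p ≪ q`. -/
def chron (p q : M n) : Prop := dist p.2 q.2 < q.1 - p.1

/-- Causal relation `p ≼ q`. -/
def causal (p q : M n) : Prop := dist p.2 q.2 ≤ q.1 - p.1

/-- Chronological future `I⁺(S)`. -/
def Iplus (S : Set (M n)) : Set (M n) := {q | ∃ p ∈ S, chron p q}

/-- Chronological past `I⁻(S)`. -/
def Iminus (S : Set (M n)) : Set (M n) := {q | ∃ p ∈ S, chron q p}

/-- `I(S) = I⁺(S) ∪ I⁻(S)`. -/
def Iboth (S : Set (M n)) : Set (M n) := Iplus S ∪ Iminus S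

/-- Causal future `J⁺(S)`. -/
def Jplus (S : Set (M n)) : Set (M n) := {q | ∃ p ∈ S, causal p q}

/-- Causal past `J⁻(S)`. -/
def Jminus (S : Set (M n)) : Set (M n) := {q | ∃ p ∈ S, causal q p}

/-- A set is achronal if no two of its points are chronologically related. -/
def Achronal (S : Set (M n)) : Prop := ∀ p ∈ S, ∀ q ∈ S, ¬ chron p q

/-- A set is acausal if no two distinct points of it are causally related. -/
def Acausal (S : Set (M n)) : Prop := ∀ p ∈ S, ∀ q ∈ S, p ≠ q → ¬ causal p q

/-- `edge(a)`: points `p ∈ closure a` such that every open neighborhood `O` of `p`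
contains `q, r` with `r ≪ p ≪ q` together with a continuous timelike curve in `O`
from `r` to `q` avoiding `a`. -/
def edge (a : Set (M n)) : Set (M n) :=
  {p | p ∈ closure a ∧ ∀ O : Set (M n), IsOpen O → p ∈ O →
    ∃ q ∈ O, ∃ r ∈ O, chron r p ∧ chron p q ∧
      ∃ γ : ℝ → M n, ContinuousOn γ (Icc 0 1) ∧ γ 0 = r ∧ γ 1 = q ∧
        (∀ s ∈ Icc (0:ℝ) 1, γ s ∈ O ∧ γ s ∉ a) ∧
        (∀ s ∈ Icc (0:ℝ) 1, ∀ t ∈ Icc (0:ℝ) 1, s < t → chron (γ s) (γ t))}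

/-- A slice: a closed achronal set with empty edge. -/
def IsSlice (Sg : Set (M n)) : Prop := IsClosed Sg ∧ Achronal Sg ∧ edge Sg = ∅

/-- A hypersurface in the slice `Sg`: a subset open in the subspace topology of `Sg`. -/
def IsHypersurfaceIn (Sg a : Set (M n)) : Prop :=
  a ⊆ Sg ∧ IsOpen ((Subtype.val : Sg → M n) ⁻¹' a)

/-- A hypersurface: subset of some slice, open in the slice's subspace topology. -/
def IsHypersurface (a : Set (M n)) : Prop := ∃ Sg, IsSlice Sg ∧ IsHypersurfaceIn Sg a

/-- The frontier (boundary) of `a` in the subspace topology of `Sg`,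
viewed as a subset of spacetime. -/
def frontierIn (Sg a : Set (M n)) : Set (M n) :=
  (Subtype.val : Sg → M n) '' frontier ((Subtype.val : Sg → M n) ⁻¹' a)

/-- A future-infinite causal worldline: the graph `{(t, x t) : t ≥ t₀}` of a
1-Lipschitz map defined on `[t₀, ∞)`. -/
def IsWorldline (W : Set (M n)) : Prop :=
  ∃ t₀ : ℝ, ∃ x : ℝ → E n, LipschitzOnWith 1 x (Ici t₀) ∧
    W = {p : M n | t₀ ≤ p.1 ∧ p.2 = x p.1}

/-- Domain of dependence `D(S)`: points through which every inextendible causal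
curve (graph of a 1-Lipschitz map `ℝ → E`) meets `S`. -/
def Dom (S : Set (M n)) : Set (M n) :=
  {p | ∀ x : ℝ → E n, LipschitzWith 1 x → x p.1 = p.2 → ∃ t : ℝ, (t, x t) ∈ S}

/-- Future domain of dependence `D⁺(S)`: every inextendible causal curve through `p`
meets `S` at some time `t ≤ p.1`. -/
def DomPlus (S : Set (M n)) : Set (M n) :=
  {p | ∀ x : ℝ → E n, LipschitzWith 1 x → x p.1 = p.2 →
    ∃ t : ℝ, t ≤ p.1 ∧ (t, x t) ∈ S}

/-- A `C¹` function has timelike gradient if at every point `∂T/∂t > ‖∇_E T‖`. -/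
def TimelikeGrad (T : M n → ℝ) : Prop :=
  ∀ p : M n,
    ‖(fderiv ℝ T p).comp (ContinuousLinearMap.inr ℝ ℝ (E n))‖ <
      fderiv ℝ T p ((1 : ℝ), (0 : E n))

/-- A past directed outward null deformation of the hypersurface `a` within the
open set `O`. -/
def IsPastOutwardNullDeformation (a O b : Set (M n)) : Prop :=
  IsHypersurface b ∧ Dom a ⊆ Dom b ∧ b ⊆ closure (Iminus a) ∧
  symmDiff a b ⊆ O ∧ edge b ⊆ edge a ∪ ((frontier (Iminus a) \ a) ∩ O)


lemma chron_vert {x : E n} {u v : ℝ} (h : u < v) : chron ((u, x) : M n) (v, x) := by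
  simp only [chron, dist_self]
  linarith

lemma edge_witness {a O : Set (M n)} {p : M n} (s : M n) {δ : ℝ} (hδ : 0 < δ)
    (hsub : ∀ t : ℝ, |t - s.1| ≤ δ → ((t, s.2) : M n) ∈ O ∧ ((t, s.2) : M n) ∉ a)
    (hr : chron (s.1 - δ, s.2) p) (hq : chron p (s.1 + δ, s.2)) :
    ∃ q ∈ O, ∃ r ∈ O, chron r p ∧ chron p q ∧
      ∃ γ : ℝ → M n, ContinuousOn γ (Icc 0 1) ∧ γ 0 = r ∧ γ 1 = q ∧
        (∀ s' ∈ Icc (0:ℝ) 1, γ s' ∈ O ∧ γ s' ∉ a) ∧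
        (∀ s' ∈ Icc (0:ℝ) 1, ∀ t ∈ Icc (0:ℝ) 1, s' < t → chron (γ s') (γ t)) := by
  have key : ∀ t ∈ Icc (0:ℝ) 1, |s.1 + δ * (2 * t - 1) - s.1| ≤ δ := by
    intro t ht
    have h1 : |δ * (2 * t - 1)| ≤ δ := by
      rw [abs_mul, abs_of_pos hδ]
      nlinarith [abs_le.2 (by constructor <;> nlinarith [ht.1, ht.2] : -1 ≤ 2*t-1 ∧ 2*t-1 ≤ 1)]
    simpa using h1
  refine ⟨(s.1 + δ, s.2), (hsub (s.1 + δ) (by simp [abs_of_nonneg hδ.le])).1,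
    (s.1 - δ, s.2), (hsub (s.1 - δ) (by simp [abs_of_nonneg hδ.le])).1, hr, hq,
    fun t => (s.1 + δ * (2 * t - 1), s.2), (by fun_prop), by simp [Prod.ext_iff]; ring, by simp [Prod.ext_iff]; ring,
    fun t ht => hsub _ (key t ht), ?_⟩
  intro s' _ t _ hlt
  apply chron_vert
  nlinarith


/-- For achronal `Σ` and `a ⊆ Σ`, `∂_Σ a ⊆ edge(a) ⊆ ∂_Σ a ∪ edge(Σ)`. -/
theorem stmt0 {n : ℕ} (hn : 0 < n) (Sg a : Set (M n))
    (hSg : Achronal Sg) (ha : a ⊆ Sg) :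
    frontierIn Sg a ⊆ edge a ∧ edge a ⊆ frontierIn Sg a ∪ edge Sg := by
  constructor
  · rintro p ⟨x, hx, rfl⟩
    rw [frontier_eq_closure_inter_closure] at hx
    have hcl : (x : M n) ∈ closure a := by
      have := hx.1
      rw [closure_subtype, Subtype.image_preimage_coe] at this
      exact closure_mono inter_subset_right this
    have hco : (x : M n) ∈ closure (Sg \ a) := by
      have := hx.2
      rw [closure_subtype] at this
      refine closure_mono ?_ this
      rintro z ⟨w, hw, rfl⟩
      exact ⟨w.2, hw⟩
    refine ⟨hcl, fun O hO hpO => ?_⟩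
    obtain ⟨ε, hε, hball⟩ := Metric.isOpen_iff.1 hO _ hpO
    obtain ⟨s, hs, hds⟩ := Metric.mem_closure_iff.1 hco (ε/4) (by linarith)
    rw [dist_comm, Prod.dist_eq, sup_lt_iff] at hds
    obtain ⟨hd1, hd2⟩ := hds
    rw [Real.dist_eq] at hd1
    have habs := abs_lt.1 hd1
    apply edge_witness s (show (0:ℝ) < ε/2 by linarith)
    · intro t hts
      constructor
      · apply hball
        rw [mem_ball, Prod.dist_eq, sup_lt_iff]
        constructor
        · rw [Real.dist_eq]
          have : |t - (x:M n).1| ≤ |t - s.1| + |s.1 - (x:M n).1| := abs_sub_le _ _ _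
          calc |t - (x:M n).1| ≤ |t - s.1| + |s.1 - (x:M n).1| := this
            _ < ε/2 + ε/4 := by apply add_lt_add_of_le_of_lt hts hd1
            _ < ε := by linarith
        · linarith [hd2]
      · intro hta
        rcases lt_trichotomy t s.1 with h | h | h
        · exact hSg _ (ha hta) _ hs.1 (chron_vert h)
        · apply hs.2
          have : ((t, s.2) : M n) = s := by rw [h]
          rwa [this] at hta
        · exact hSg _ hs.1 _ (ha hta) (chron_vert h)
    · show dist s.2 (x:M n).2 < (x:M n).1 - (s.1 - ε/2)
      linarith [habs.1, habs.2, hd2]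
    · show dist (x:M n).2 s.2 < s.1 + ε/2 - (x:M n).1
      rw [dist_comm]
      linarith [habs.1, habs.2, hd2]
  · intro p hp
    by_cases hpS : p ∈ Sg
    · by_cases hf : (⟨p, hpS⟩ : Sg) ∈ frontier ((Subtype.val : Sg → M n) ⁻¹' a)
      · exact Or.inl ⟨_, hf, rfl⟩
      · right
        have hclp : (⟨p, hpS⟩ : Sg) ∈ closure ((Subtype.val : Sg → M n) ⁻¹' a) := by
          rw [closure_subtype, Subtype.image_preimage_coe]
          exact Metric.mem_closure_iff.2 fun ε hε => by
            obtain ⟨b, hb, hbd⟩ := Metric.mem_closure_iff.1 hp.1 ε hε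
            exact ⟨b, ⟨ha hb, hb⟩, hbd⟩
        have hint : (⟨p, hpS⟩ : Sg) ∈ interior ((Subtype.val : Sg → M n) ⁻¹' a) := by
          by_contra h
          exact hf ⟨hclp, h⟩
        obtain ⟨V, hVopen, hVeq⟩ := isOpen_induced_iff.1 (isOpen_interior (s := (Subtype.val : Sg → M n) ⁻¹' a))
        have hpV : p ∈ V := by
          have : (⟨p, hpS⟩ : Sg) ∈ (Subtype.val : Sg → M n) ⁻¹' V := hVeq ▸ hint
          exact this
        refine ⟨subset_closure hpS, fun O hO hpO => ?_⟩
        obtain ⟨ε, hε, hball⟩ := Metric.isOpen_iff.1 (hVopen.inter hO) p ⟨hpV, hpO⟩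
        obtain ⟨q, hq, r, hr, hrp, hpq, γ, hγc, hγ0, hγ1, hγmem, hγchron⟩ :=
          hp.2 (ball p ε) isOpen_ball (mem_ball_self hε)
        have hOsub : ball p ε ⊆ O := fun z hz => (hball hz).2
        refine ⟨q, hOsub hq, r, hOsub hr, hrp, hpq, γ, hγc, hγ0, hγ1, fun s hs => ?_, hγchron⟩
        refine ⟨hOsub (hγmem s hs).1, fun hgS => ?_⟩
        have hgV : γ s ∈ V := (hball (hγmem s hs).1).1
        have : (⟨γ s, hgS⟩ : Sg) ∈ (Subtype.val : Sg → M n) ⁻¹' V := hgV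
        rw [hVeq] at this
        have h2 : (⟨γ s, hgS⟩ : Sg) ∈ (Subtype.val : Sg → M n) ⁻¹' a := interior_subset this
        exact (hγmem s hs).2 h2
    · right
      refine ⟨closure_mono ha hp.1, fun O hO hpO => ?_⟩
      obtain ⟨ε, hε, hball⟩ := Metric.isOpen_iff.1 hO _ hpO
      have huniq : ∀ u v : ℝ, ((u, p.2) : M n) ∈ Sg → ((v, p.2) : M n) ∈ Sg → u = v := by
        intro u v hu hv
        by_contra hne
        rcases lt_or_gt_of_ne hne with h | h
        · exact hSg _ hu _ hv (chron_vert h)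
        · exact hSg _ hv _ hu (chron_vert h)
      have hline : ∃ δ : ℝ, 0 < δ ∧ δ < ε ∧ ∀ t : ℝ, |t - p.1| ≤ δ → ((t, p.2) : M n) ∉ Sg := by
        by_cases hu : ∃ u : ℝ, ((u, p.2) : M n) ∈ Sg
        · obtain ⟨u, hu⟩ := hu
          have hune : u ≠ p.1 := by
            intro h
            apply hpS
            have : ((u, p.2) : M n) = p := by rw [h]
            rwa [this] at hu
          have hpos : 0 < |u - p.1| := abs_pos.2 (sub_ne_zero.2 hune)
          refine ⟨min (ε/2) (|u - p.1|/2), by positivity, lt_of_le_of_lt (min_le_left _ _) (by linarith), ?_⟩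
          intro t ht hts
          have : t = u := huniq t u hts hu
          subst this
          have h1 : |t - p.1| ≤ |t - p.1|/2 := le_trans ht (min_le_right _ _)
          linarith
        · exact ⟨ε/2, by linarith, by linarith, fun t _ h => hu ⟨t, h⟩⟩
      obtain ⟨δ, hδ, hδε, hav⟩ := hline
      apply edge_witness p hδ
      · intro t ht
        refine ⟨hball ?_, hav t ht⟩
        rw [mem_ball, Prod.dist_eq, sup_lt_iff]
        exact ⟨by rw [Real.dist_eq]; linarith [ht], by simpa using hε⟩
      · show dist p.2 p.2 < p.1 - (p.1 - δ)
        simpa using hδ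
      · show dist p.2 p.2 < p.1 + δ - p.1
        simpa using hδ

end
end

section
/- Let Σ ⊆ M be a slice and let a ⊆ Σ. Then edge(a) equals the frontier of a in the subspace topology of Σ. (Minkowski-spacetime instance of the Remark following Proposition 'edge'.) -/
open Set Metric

noncomputable section

variable {n : ℕ}

/-- Auxiliary: on a slice, every sufficiently local timelike curve from the past
of a point of the slice to its future must meet the slice. -/
lemma meets_slice_aux {Sg : Set (M n)} (hSg : IsSlice Sg) {p : M n} (hp : p ∈ Sg) :
    ∃ O₀ : Set (M n), IsOpen O₀ ∧ p ∈ O₀ ∧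
      ¬ (∃ q ∈ O₀, ∃ r ∈ O₀, chron r p ∧ chron p q ∧
        ∃ γ : ℝ → M n, ContinuousOn γ (Icc 0 1) ∧ γ 0 = r ∧ γ 1 = q ∧
          (∀ s ∈ Icc (0:ℝ) 1, γ s ∈ O₀ ∧ γ s ∉ Sg) ∧
          (∀ s ∈ Icc (0:ℝ) 1, ∀ t ∈ Icc (0:ℝ) 1, s < t → chron (γ s) (γ t))) := by
  have hpe : p ∉ edge Sg := by simp [hSg.2.2]
  simp only [edge, mem_setOf_eq, not_and] at hpe
  by_contra h
  push_neg at h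
  exact hpe (subset_closure hp) h

/-- For a slice `Σ` and `a ⊆ Σ`, `edge(a) = ∂_Σ a`. -/
theorem stmt1 {n : ℕ} (hn : 0 < n) (Sg a : Set (M n))
    (hSg : IsSlice Sg) (ha : a ⊆ Sg) :
    edge a = frontierIn Sg a := by
  ext p
  have hclosed : IsClosed Sg := hSg.1
  have hach : Achronal Sg := hSg.2.1
  constructor
  · -- edge a ⊆ frontierIn Sg a
    rintro ⟨hpc, hpO⟩
    have hpSg : p ∈ Sg := by
      have h1 : closure a ⊆ closure Sg := closure_mono ha
      rw [hclosed.closure_eq] at h1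
      exact h1 hpc
    obtain ⟨O₀, hO₀open, hpO₀, hO₀⟩ := meets_slice_aux hSg hpSg
    refine ⟨⟨p, hpSg⟩, ⟨?_, ?_⟩, rfl⟩
    · -- in closure of preimage
      rw [closure_subtype, Subtype.image_preimage_val, inter_eq_self_of_subset_right ha]
      exact hpc
    · -- not in interior of preimage
      intro hint
      rw [mem_interior_iff_mem_nhds, mem_nhds_subtype] at hint
      obtain ⟨t, ht, hts⟩ := hint
      obtain ⟨U, hUt, hUopen, hpU⟩ := _root_.mem_nhds_iff.mp ht
      have hUa : ∀ z ∈ U, z ∈ Sg → z ∈ a := fun z hzU hzSg =>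
        hts (show (⟨z, hzSg⟩ : Sg) ∈ Subtype.val ⁻¹' t from hUt hzU)
      obtain ⟨q, hq, r, hr, hrp, hpq, γ, hγc, hγ0, hγ1, hγO, hγmono⟩ :=
        hpO (O₀ ∩ U) (hO₀open.inter hUopen) ⟨hpO₀, hpU⟩
      by_cases hmeets : ∃ s ∈ Icc (0:ℝ) 1, γ s ∈ Sg
      · obtain ⟨s, hs, hsSg⟩ := hmeets
        exact (hγO s hs).2 (hUa _ (hγO s hs).1.2 hsSg)
      · push_neg at hmeets
        exact hO₀ ⟨q, hq.1, r, hr.1, hrp, hpq, γ, hγc, hγ0, hγ1,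
          fun s hs => ⟨(hγO s hs).1.1, hmeets s hs⟩, hγmono⟩
  · -- frontierIn Sg a ⊆ edge a
    rintro ⟨⟨p, hpSg⟩, hpf, rfl⟩
    have hpc : p ∈ closure a := by
      have h1 := hpf.1
      rw [closure_subtype, Subtype.image_preimage_val, inter_eq_self_of_subset_right ha] at h1
      exact h1
    have hfr : ∀ U : Set (M n), IsOpen U → p ∈ U → ∃ z, z ∈ U ∧ z ∈ Sg ∧ z ∉ a := by
      intro U hU hpU
      by_contra h
      push_neg at h
      have hsub : (Subtype.val : Sg → M n) ⁻¹' U ⊆ Subtype.val ⁻¹' a :=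
        fun z hz => h z hz z.2
      exact hpf.2 (((hU.preimage continuous_subtype_val).subset_interior_iff.mpr hsub) hpU)
    refine ⟨hpc, ?_⟩
    intro O hO hpO
    obtain ⟨ε, hε, hball⟩ := Metric.isOpen_iff.mp hO p hpO
    set δ : ℝ := ε / 8 with hδdef
    have hδ : 0 < δ := by positivity
    obtain ⟨z, hzU, hzSg, hza⟩ := hfr (ball p δ) isOpen_ball (mem_ball_self hδ)
    rw [mem_ball, Prod.dist_eq, max_lt_iff] at hzU
    have h1 := abs_lt.mp (by rw [← Real.dist_eq]; exact hzU.1)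
    have h2 : dist z.2 p.2 < δ := hzU.2
    set γ : ℝ → M n := fun s => (z.1 - 3*δ + 6*δ*s, z.2) with hγdef
    have key : ∀ s ∈ Icc (0:ℝ) 1, γ s ∈ ball p ε := by
      intro s hs
      rw [mem_ball, Prod.dist_eq, max_lt_iff]
      constructor
      · rw [Real.dist_eq, abs_lt]
        have hs0 : 0 ≤ 6*δ*s := by nlinarith [hs.1, hδ]
        have hs1 : 6*δ*s ≤ 6*δ := by nlinarith [hs.2, hδ]
        constructor <;> simp only [hγdef] <;> nlinarith [h1.1, h1.2]
      · calc dist (γ s).2 p.2 = dist z.2 p.2 := rfl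
          _ < δ := h2
          _ < ε := by rw [hδdef]; linarith
    have havoid : ∀ s ∈ Icc (0:ℝ) 1, γ s ∉ a := by
      intro s hs hsa
      rcases lt_trichotomy (γ s).1 z.1 with hlt | heq | hgt
      · exact hach (γ s) (ha hsa) z hzSg
          (by simp only [chron, hγdef, dist_self]; simpa using hlt)
      · have : γ s = z := Prod.ext heq rfl
        exact hza (this ▸ hsa)
      · exact hach z hzSg (γ s) (ha hsa)
          (by simp only [chron, hγdef, dist_self]; simpa [dist_comm] using hgt)
    refine ⟨γ 1, hball (key 1 ⟨zero_le_one, le_refl 1⟩), γ 0,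
      hball (key 0 ⟨le_refl 0, zero_le_one⟩), ?_, ?_, γ, ?_, rfl, rfl, ?_, ?_⟩
    · show dist (γ 0).2 p.2 < p.1 - (γ 0).1
      simp only [hγdef]
      calc dist z.2 p.2 < δ := h2
        _ < p.1 - (z.1 - 3*δ + 6*δ*0) := by nlinarith [h1.1, h1.2]
    · show dist p.2 (γ 1).2 < (γ 1).1 - p.1
      simp only [hγdef]
      calc dist p.2 z.2 = dist z.2 p.2 := dist_comm _ _
        _ < δ := h2
        _ < (z.1 - 3*δ + 6*δ*1) - p.1 := by nlinarith [h1.1, h1.2]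
    · exact (Continuous.continuousOn (by fun_prop))
    · exact fun s hs => ⟨hball (key s hs), havoid s hs⟩
    · intro s hs t ht hst
      show dist (γ s).2 (γ t).2 < (γ t).1 - (γ s).1
      simp only [hγdef, dist_self]
      nlinarith [hδ]


end
end

section
/- Let Σ ⊆ M be a slice and let a ⊆ Σ be a hypersurface (i.e. open in the subspace topology of Σ). Then closure(a) = a ∪ edge(a), where the closure is taken in M. -/
open Set Metric

noncomputable section

variable {n : ℕ}

/-- For a slice `Σ` and a hypersurface `a ⊆ Σ`,
`closure(a) = a ∪ edge(a)`. -/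
theorem stmt2 {n : ℕ} (hn : 0 < n) (Sg a : Set (M n))
    (hSg : IsSlice Sg) (ha : IsHypersurfaceIn Sg a) :
    closure a = a ∪ edge a := by
  apply Subset.antisymm
  · intro p hp
    by_cases hpa : p ∈ a
    · exact Or.inl hpa
    right
    refine ⟨hp, ?_⟩
    intro O hO hpO
    obtain ⟨ε, hε, hball⟩ := Metric.isOpen_iff.1 hO p hpO
    have hpSg : p ∈ Sg := hSg.1.closure_subset_iff.2 ha.1 hp
    set γ : ℝ → M n := fun s => (p.1 + ε/2 * (2*s - 1), p.2) with hγ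
    have hmem : ∀ s ∈ Icc (0:ℝ) 1, γ s ∈ Metric.ball p ε := by
      intro s hs
      have h1 : |2*s - 1| ≤ 1 := by
        rw [abs_le]; constructor <;> nlinarith [hs.1, hs.2]
      have h2 : dist (γ s).1 p.1 < ε := by
        simp only [γ, Real.dist_eq]
        have he : |p.1 + ε/2*(2*s-1) - p.1| = |ε/2| * |2*s-1| := by
          rw [← abs_mul]; ring_nf
        rw [he, abs_of_pos (half_pos hε)]
        nlinarith
      have h3 : dist (γ s).2 p.2 < ε := by simp [γ]; linarith
      rw [Metric.mem_ball, Prod.dist_eq]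
      exact max_lt h2 h3
    refine ⟨γ 1, hball (hmem 1 (by norm_num)), γ 0, hball (hmem 0 (by norm_num)), ?_, ?_,
      γ, ?_, rfl, rfl, ?_, ?_⟩
    · show chron (γ 0) p
      simp only [chron, γ]
      simp; linarith
    · show chron p (γ 1)
      simp only [chron, γ]
      simp; linarith
    · exact (Continuous.continuousOn (by fun_prop))
    · intro s hs
      refine ⟨hball (hmem s hs), ?_⟩
      intro hsa
      have hsSg : γ s ∈ Sg := ha.1 hsa
      rcases lt_trichotomy s (1/2 : ℝ) with h | h | h
      · exact hSg.2.1 (γ s) hsSg p hpSg (by simp only [chron, γ]; simp; nlinarith)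
      · apply hpa
        have : γ s = p := by simp [γ, h]
        rwa [this] at hsa
      · exact hSg.2.1 p hpSg (γ s) hsSg (by simp only [chron, γ]; simp; nlinarith)
    · intro s hs t ht hst
      simp only [chron, γ]
      simp; nlinarith
  · rintro x (hx | hx)
    · exact subset_closure hx
    · exact hx.1

end
end

section
/- For every nonempty compact set S ⊆ M there exist a point p ∈ S and a vector v ∈ E with ‖v‖ = 1 such that p + t • (1, v) ∉ I⁺(S) for every t ∈ [0, ∞); that is, there is a future-inextendible (future-complete) null geodesic ray starting on S that never enters the chronological future of S. (Minkowski-spacetime instance of the paper's Proposition quoting Minguzzi's Theorem 2.10, using that Minkowski spacetime is past-reflecting and spatially open.) -/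
open Set Metric

noncomputable section

variable {n : ℕ}

/-! For a unit vector `v`, the function `t - ⟪v, x⟫` is constant along the null direction
`(1, v)` and strictly increasing along `≪`, by Cauchy–Schwarz. Starting the null ray in
direction `v` at a minimiser of this function on the compact set `S`, the ray stays at the
minimal value, while every point of `I⁺(S)` lies strictly above it. -/

open scoped InnerProductSpace

theorem exists_norm_eq_one_of_pos (hn : 0 < n) : ∃ v : E n, ‖v‖ = 1 := by
  have : Nonempty (Fin n) := ⟨⟨0, hn⟩⟩
  exact exists_norm_eq (E n) zero_le_one

def nullTime (v : E n) (p : M n) : ℝ := p.1 - ⟪v, p.2⟫_ℝ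

theorem continuous_nullTime (v : E n) : Continuous (nullTime v) :=
  continuous_fst.sub (continuous_const.inner continuous_snd)

theorem nullTime_add_smul {v : E n} (hv : ‖v‖ = 1) (p : M n) (t : ℝ) :
    nullTime v (p + t • (((1 : ℝ), v) : M n)) = nullTime v p := by
  have hvv : ⟪v, v⟫_ℝ = 1 := by rw [real_inner_self_eq_norm_sq, hv, one_pow]
  simp only [nullTime, Prod.fst_add, Prod.snd_add, Prod.smul_fst, Prod.smul_snd, smul_eq_mul,
    inner_add_right, real_inner_smul_right, hvv]
  ring

theorem nullTime_lt_of_chron {v : E n} (hv : ‖v‖ ≤ 1) {p q : M n} (hpq : chron p q) :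
    nullTime v p < nullTime v q := by
  have hinner : ⟪v, q.2 - p.2⟫_ℝ ≤ dist p.2 q.2 :=
    calc ⟪v, q.2 - p.2⟫_ℝ ≤ ‖v‖ * ‖q.2 - p.2‖ := real_inner_le_norm _ _
      _ ≤ ‖q.2 - p.2‖ := mul_le_of_le_one_left (norm_nonneg _) hv
      _ = dist p.2 q.2 := by rw [dist_comm, dist_eq_norm]
  have : ⟪v, q.2 - p.2⟫_ℝ < q.1 - p.1 := hinner.trans_lt hpq
  rw [inner_sub_right] at this
  simp only [nullTime]
  linarith

theorem notMem_Iplus_of_isMinOn {v : E n} (hv : ‖v‖ ≤ 1) {S : Set (M n)} {p q : M n}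
    (hp : IsMinOn (nullTime v) S p) (hq : nullTime v q ≤ nullTime v p) : q ∉ Iplus S := by
  rintro ⟨s, hs, hsq⟩
  exact (hp hs).not_gt ((nullTime_lt_of_chron hv hsq).trans_le hq)

/-- From every nonempty compact `S` there is a future-complete null
ray starting on `S` that never enters `I⁺(S)`. -/
theorem stmt3 {n : ℕ} (hn : 0 < n) (S : Set (M n))
    (hS : IsCompact S) (hne : S.Nonempty) :
    ∃ p ∈ S, ∃ v : E n, ‖v‖ = 1 ∧
      ∀ t : ℝ, 0 ≤ t → p + t • (((1 : ℝ), v) : M n) ∉ Iplus S := by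
  obtain ⟨v, hv⟩ := exists_norm_eq_one_of_pos hn
  obtain ⟨p, hpS, hmin⟩ := hS.exists_isMinOn hne (continuous_nullTime v).continuousOn
  refine ⟨p, hpS, v, hv, fun t _ => ?_⟩
  exact notMem_Iplus_of_isMinOn hv.le hmin (nullTime_add_smul hv p t).le

end
end

section
/- Let W be a future-infinite causal worldline in M and let p ∈ ∂I⁻(W). Then there exists a vector v ∈ E with ‖v‖ = 1 such that p + t • (1, v) ∈ ∂I⁻(W) for all t ∈ [0, ∞); that is, through every point of the causal horizon ∂I⁻(W) there passes a future-infinite null geodesic contained in ∂I⁻(W). (Minkowski-spacetime instance of the paper's unnumbered Proposition on horizon generators.) -/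
open Set Metric

noncomputable section

variable {n : ℕ}

/-!
For `W` the graph of a 1-Lipschitz `x` on `[t₀, ∞)`, a point `(τ, y)` lies in `I⁻(W)` iff
`τ < s - ‖y - x s‖` for some `s ≥ t₀`. If these retarded times are unbounded, `I⁻(W)` is all of
spacetime and the horizon is empty. Otherwise `I⁻(W)` is the strict subgraph of their supremum
`L y`, which is 1-Lipschitz, so `∂I⁻(W)` is the graph of `L`, and the null ray from `(L y, y)` in
direction `v` stays on it iff `L (y + t • v) = L y + t`. Such a `v` is a limit point of the unit
vectors from `y` towards `x s` as `s → ∞`: stepping a distance `t ≤ ‖y - x s‖` towards `x s` raises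
the retarded time at `s` by exactly `t`, while `s - ‖y - x s‖` increases to `L y`.
-/

open Filter Topology

section HorizonTime

variable {X : Type*} [PseudoMetricSpace X]

def retardedTime (x : ℝ → X) (y : X) (s : ℝ) : ℝ := s - dist y (x s)

def horizonTime (x : ℝ → X) (t₀ : ℝ) (y : X) : ℝ := sSup (retardedTime x y '' Ici t₀)

variable {x : ℝ → X} {t₀ : ℝ}

lemma retardedTime_le_add_dist (y y' : X) (s : ℝ) :
    retardedTime x y s ≤ retardedTime x y' s + dist y y' := by
  unfold retardedTime
  linarith [dist_triangle y' y (x s), dist_comm y y']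

lemma BddAbove.retardedTime_image {y' : X} {S : Set ℝ}
    (h : BddAbove (retardedTime x y' '' S)) (y : X) : BddAbove (retardedTime x y '' S) := by
  obtain ⟨B, hB⟩ := h
  refine ⟨B + dist y y', ?_⟩
  rintro _ ⟨s, hs, rfl⟩
  linarith [retardedTime_le_add_dist (x := x) y y' s, hB (mem_image_of_mem _ hs)]

lemma monotoneOn_retardedTime (hx : LipschitzOnWith 1 x (Ici t₀)) (y : X) :
    MonotoneOn (retardedTime x y) (Ici t₀) := by
  intro s hs s' hs' hss'
  have hstep : dist (x s) (x s') ≤ s' - s := by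
    simpa [Real.dist_eq, abs_of_nonpos (sub_nonpos.2 hss')] using hx.dist_le_mul s hs s' hs'
  unfold retardedTime
  linarith [dist_triangle y (x s) (x s')]

lemma retardedTime_le_horizonTime {y : X} (hB : BddAbove (retardedTime x y '' Ici t₀)) {s : ℝ}
    (hs : t₀ ≤ s) : retardedTime x y s ≤ horizonTime x t₀ y :=
  le_csSup hB (mem_image_of_mem _ hs)

lemma lt_horizonTime_iff {y : X} (hB : BddAbove (retardedTime x y '' Ici t₀)) {a : ℝ} :
    a < horizonTime x t₀ y ↔ ∃ s, t₀ ≤ s ∧ a < retardedTime x y s := by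
  rw [horizonTime, lt_csSup_iff hB ((nonempty_Ici).image _)]
  simp only [mem_image, mem_Ici, exists_exists_and_eq_and]

lemma lipschitzWith_horizonTime (hB : ∀ y, BddAbove (retardedTime x y '' Ici t₀)) :
    LipschitzWith 1 (horizonTime x t₀) := by
  refine LipschitzWith.of_le_add fun y y' => csSup_le ((nonempty_Ici).image _) ?_
  rintro _ ⟨s, hs, rfl⟩
  linarith [retardedTime_le_add_dist (x := x) y y' s, retardedTime_le_horizonTime (hB y') hs]

lemma tendsto_retardedTime_atTop (hx : LipschitzOnWith 1 x (Ici t₀)) {y : X}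
    (hB : BddAbove (retardedTime x y '' Ici t₀)) :
    Tendsto (retardedTime x y) atTop (𝓝 (horizonTime x t₀ y)) := by
  refine tendsto_order.2 ⟨fun a ha => ?_, fun a ha => ?_⟩
  · obtain ⟨s, hs, has⟩ := (lt_horizonTime_iff hB).1 ha
    filter_upwards [eventually_ge_atTop s] with s' hs'
    exact has.trans_le (monotoneOn_retardedTime hx y hs (hs.trans hs') hs')
  · filter_upwards [eventually_ge_atTop t₀] with s hs
    exact (retardedTime_le_horizonTime hB hs).trans_lt ha

lemma tendsto_dist_worldline_atTop {y : X} (hB : BddAbove (retardedTime x y '' Ici t₀)) :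
    Tendsto (fun s => dist y (x s)) atTop atTop := by
  refine tendsto_atTop_mono' _ ?_ (tendsto_atTop_add_const_right _ (-horizonTime x t₀ y) tendsto_id)
  filter_upwards [eventually_ge_atTop t₀] with s hs
  have := retardedTime_le_horizonTime hB hs
  unfold retardedTime at this
  simp only [id]
  linarith

end HorizonTime

section Ray

variable {V : Type*} [NormedAddCommGroup V] [NormedSpace ℝ V]

lemma dist_add_smul_toward {y z : V} {t : ℝ} (ht : 0 ≤ t) (htz : t ≤ dist y z) :
    dist (y + t • (dist y z)⁻¹ • (z - y)) z = dist y z - t := by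
  rcases ht.eq_or_lt with rfl | ht
  · simp
  have hD : dist y z ≠ 0 := (ht.trans_le htz).ne'
  have hvec : y + t • (dist y z)⁻¹ • (z - y) - z = (1 - t / dist y z) • (y - z) := by
    rw [smul_smul, sub_smul, one_smul, div_eq_mul_inv, ← neg_sub z y, smul_neg]
    abel
  rw [dist_eq_norm, hvec, norm_smul, Real.norm_eq_abs, ← dist_eq_norm,
    abs_of_nonneg (by rw [sub_nonneg, div_le_one (ht.trans_le htz)]; exact htz)]
  field_simp

lemma add_le_horizonTime_add_smul {x : ℝ → V} {t₀ : ℝ} (hx : LipschitzOnWith 1 x (Ici t₀))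
    (hB : ∀ y, BddAbove (retardedTime x y '' Ici t₀)) {y v : V} {ι : Type*} {l : Filter ι}
    [l.NeBot] {s : ι → ℝ} (hs : Tendsto s l atTop)
    (hv : Tendsto (fun i => (dist y (x (s i)))⁻¹ • (x (s i) - y)) l (𝓝 v)) {t : ℝ} (ht : 0 ≤ t) :
    horizonTime x t₀ y + t ≤ horizonTime x t₀ (y + t • v) := by
  have hL := (lipschitzWith_horizonTime hB).continuous
  refine le_of_tendsto_of_tendsto (((tendsto_retardedTime_atTop hx (hB y)).comp hs).add_const t)
    ((hL.tendsto _).comp (tendsto_const_nhds.add (hv.const_smul t))) ?_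
  filter_upwards [hs.eventually (eventually_ge_atTop t₀),
    hs.eventually ((tendsto_dist_worldline_atTop (hB y)).eventually_ge_atTop t)] with i hi hti
  calc retardedTime x y (s i) + t
      = retardedTime x (y + t • (dist y (x (s i)))⁻¹ • (x (s i) - y)) (s i) := by
        unfold retardedTime
        rw [dist_add_smul_toward ht hti]
        ring
    _ ≤ _ := retardedTime_le_horizonTime (hB _) hi

lemma exists_norm_eq_one_horizonTime_add_smul [ProperSpace V] {x : ℝ → V} {t₀ : ℝ}
    (hx : LipschitzOnWith 1 x (Ici t₀)) (hB : ∀ y, BddAbove (retardedTime x y '' Ici t₀))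
    (y : V) : ∃ v : V, ‖v‖ = 1 ∧
      ∀ t, 0 ≤ t → horizonTime x t₀ (y + t • v) = horizonTime x t₀ y + t := by
  set u : ℕ → V := fun k => (dist y (x (t₀ + k)))⁻¹ • (x (t₀ + k) - y)
  have hu : ∀ k, u k ∈ closedBall (0 : V) 1 := by
    intro k
    rw [mem_closedBall_zero_iff, norm_smul, norm_inv, Real.norm_eq_abs, abs_dist, dist_eq_norm']
    exact inv_mul_le_one_of_le₀ le_rfl (norm_nonneg _)
  obtain ⟨v, hv, φ, hφ, hlim⟩ := (isCompact_closedBall (0 : V) 1).tendsto_subseq hu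
  have hs : Tendsto (fun k => t₀ + (φ k : ℝ)) atTop atTop :=
    tendsto_atTop_add_const_left _ _ (tendsto_natCast_atTop_atTop.comp hφ.tendsto_atTop)
  have hlow : ∀ t, 0 ≤ t → horizonTime x t₀ y + t ≤ horizonTime x t₀ (y + t • v) :=
    fun t ht => add_le_horizonTime_add_smul hx hB hs hlim ht
  have hup : ∀ t, 0 ≤ t → horizonTime x t₀ (y + t • v) ≤ horizonTime x t₀ y + t * ‖v‖ := by
    intro t ht
    have := (lipschitzWith_horizonTime hB).le_add_mul (y + t • v) y
    rwa [dist_self_add_left, norm_smul, Real.norm_eq_abs, abs_of_nonneg ht, NNReal.coe_one,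
      one_mul] at this
  -- `u k = 0` when `x (t₀ + k) = y`, so `v` is only known to lie in the ball; `t = 1` gives `‖v‖ ≥ 1`
  have hv1 : ‖v‖ = 1 :=
    le_antisymm (mem_closedBall_zero_iff.1 hv) (by linarith [hlow 1 zero_le_one, hup 1 zero_le_one])
  exact ⟨v, hv1, fun t ht => le_antisymm (by simpa [hv1] using hup t ht) (hlow t ht)⟩

end Ray

lemma frontier_setOf_fst_lt {Y : Type*} [TopologicalSpace Y] {L : Y → ℝ} (hL : Continuous L) :
    frontier {q : ℝ × Y | q.1 < L q.2} = {q | q.1 = L q.2} := by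
  refine (frontier_lt_subset_eq continuous_fst (hL.comp continuous_snd)).antisymm fun q hq => ?_
  replace hq : q.1 = L q.2 := hq
  rw [(isOpen_lt continuous_fst (hL.comp continuous_snd)).frontier_eq]
  refine ⟨?_, fun h => (h : q.1 < L q.2).ne hq⟩
  have hlim : Tendsto (fun ε : ℝ => (q.1 - ε, q.2)) (𝓝[>] 0) (𝓝 q) := by
    refine (Continuous.tendsto' ?_ 0 q (by simp)).mono_left nhdsWithin_le_nhds
    fun_prop
  refine mem_closure_of_tendsto hlim ?_
  filter_upwards [self_mem_nhdsWithin] with ε hε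
  show q.1 - ε < L q.2
  linarith [mem_Ioi.1 hε]

section Minkowski

variable {t₀ : ℝ} {x : ℝ → E n}

lemma mem_Iminus_graph_iff {q : M n} :
    q ∈ Iminus {p : M n | t₀ ≤ p.1 ∧ p.2 = x p.1} ↔ ∃ s, t₀ ≤ s ∧ q.1 < retardedTime x q.2 s := by
  unfold Iminus chron retardedTime
  constructor
  · rintro ⟨r, ⟨hr, hrx⟩, hqr⟩
    exact ⟨r.1, hr, by rw [hrx] at hqr; linarith⟩
  · rintro ⟨s, hs, hq⟩
    exact ⟨(s, x s), ⟨hs, rfl⟩, by dsimp only; linarith⟩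

lemma Iminus_graph_eq (hB : ∀ y, BddAbove (retardedTime x y '' Ici t₀)) :
    Iminus {p : M n | t₀ ≤ p.1 ∧ p.2 = x p.1} = {q | q.1 < horizonTime x t₀ q.2} := by
  ext q
  rw [mem_Iminus_graph_iff, mem_ofPred_eq, lt_horizonTime_iff (hB q.2)]

lemma Iminus_graph_eq_univ {y : E n} (hB : ¬ BddAbove (retardedTime x y '' Ici t₀)) :
    Iminus {p : M n | t₀ ≤ p.1 ∧ p.2 = x p.1} = univ := by
  refine eq_univ_of_forall fun q => mem_Iminus_graph_iff.2 ?_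
  by_contra! h
  exact hB (BddAbove.retardedTime_image ⟨q.1, by rintro _ ⟨s, hs, rfl⟩; exact h s hs⟩ y)

end Minkowski

theorem stmt4_general {n : ℕ} (W : Set (M n)) (hW : IsWorldline W)
    (p : M n) (hp : p ∈ frontier (Iminus W)) :
    ∃ v : E n, ‖v‖ = 1 ∧
      ∀ t : ℝ, 0 ≤ t → p + t • (((1 : ℝ), v) : M n) ∈ frontier (Iminus W) := by
  obtain ⟨t₀, x, hx, rfl⟩ := hW
  by_cases hB : BddAbove (retardedTime x p.2 '' Ici t₀)
  swap
  · rw [Iminus_graph_eq_univ hB, frontier_univ] at hp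
    exact hp.elim
  have hB' : ∀ y, BddAbove (retardedTime x y '' Ici t₀) := hB.retardedTime_image
  rw [Iminus_graph_eq hB', frontier_setOf_fst_lt (lipschitzWith_horizonTime hB').continuous]
    at hp ⊢
  obtain ⟨v, hv, hray⟩ := exists_norm_eq_one_horizonTime_add_smul hx hB' p.2
  refine ⟨v, hv, fun t ht => ?_⟩
  simp only [mem_ofPred_eq, Prod.fst_add, Prod.snd_add, Prod.smul_fst, Prod.smul_snd, smul_eq_mul,
    mul_one] at hp ⊢
  rw [hray t ht, ← hp]

/-- Through every point of the causal horizon `∂I⁻(W)` of a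
future-infinite causal worldline `W` there passes a future-infinite null ray
contained in `∂I⁻(W)`. -/
theorem stmt4 {n : ℕ} (hn : 0 < n) (W : Set (M n)) (hW : IsWorldline W)
    (p : M n) (hp : p ∈ frontier (Iminus W)) :
    ∃ v : E n, ‖v‖ = 1 ∧
      ∀ t : ℝ, 0 ≤ t → p + t • (((1 : ℝ), v) : M n) ∈ frontier (Iminus W) :=
  stmt4_general W hW p hp

end
end

section
/- Let W = {(t, x(t)) : t ≥ t₀} be a future-infinite causal worldline in M and let p ∈ W with p ∉ I⁻(W). Then there exists a vector v ∈ E with ‖v‖ = 1 such that every q ∈ W with p ≼ q satisfies q = p + (q.1 − p.1) • (1, v); that is, the portion of W to the causal future of p lies on a single future-directed null ray from p. (This is case (i) in the proof of the paper's unnumbered Proposition on horizon generators.) -/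
open Set Metric

noncomputable section

variable {n : ℕ}

/-- If `p ∈ W` and `p ∉ I⁻(W)`, the portion of `W` to the causal
future of `p` lies on a single future-directed null ray from `p`. -/
theorem stmt5 {n : ℕ} (hn : 0 < n) (W : Set (M n)) (hW : IsWorldline W)
    (p : M n) (hpW : p ∈ W) (hp : p ∉ Iminus W) :
    ∃ v : E n, ‖v‖ = 1 ∧
      ∀ q ∈ W, causal p q → q = p + (q.1 - p.1) • (((1 : ℝ), v) : M n) := by
  obtain ⟨t₀, x, hLip, hWeq⟩ := hW
  subst hWeq
  obtain ⟨hpt, hpx⟩ := hpW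
  -- distances are saturated along the worldline after p
  have hdle : ∀ s t : ℝ, t₀ ≤ s → t₀ ≤ t → dist (x s) (x t) ≤ |s - t| := by
    intro s t hs ht
    have := hLip.dist_le_mul s hs t ht
    simpa [Real.dist_eq] using this
  have key : ∀ t : ℝ, p.1 ≤ t → dist (x p.1) (x t) = t - p.1 := by
    intro t ht
    have htW : ((t, x t) : M n) ∈ {q : M n | t₀ ≤ q.1 ∧ q.2 = x q.1} :=
      ⟨le_trans hpt ht, rfl⟩
    have hnchron : ¬ chron p (t, x t) := fun hc => hp ⟨(t, x t), htW, hc⟩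
    have h2 : t - p.1 ≤ dist (x p.1) (x t) := by
      rw [chron] at hnchron
      push_neg at hnchron
      simpa [hpx] using hnchron
    have h1 : dist (x p.1) (x t) ≤ t - p.1 := by
      have := hdle p.1 t hpt (le_trans hpt ht)
      rwa [abs_of_nonpos (by linarith), neg_sub] at this
    linarith
  set a : E n := x p.1 with ha
  set u : ℝ := p.1 + 1 with hu
  have hut₀ : t₀ ≤ u := by simp only [hu]; linarith
  set v : E n := x u - a with hv
  have hvn : ‖v‖ = 1 := by
    have := key u (by simp [hu])
    rw [dist_eq_norm'] at this
    simpa [hv, hu] using this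
  refine ⟨v, hvn, ?_⟩
  have main : ∀ t : ℝ, p.1 ≤ t → x t = a + (t - p.1) • v := by
    intro t ht
    have htt₀ : t₀ ≤ t := le_trans hpt ht
    rcases le_total t u with hcase | hcase
    · -- p.1 ≤ t ≤ u
      set y : E n := x t - a with hy
      set z : E n := x u - x t with hz
      have hyz : y + z = v := by simp [hy, hz, hv]
      have hyn : ‖y‖ = t - p.1 := by
        have := key t ht; rwa [dist_eq_norm'] at this
      have hzle : ‖z‖ ≤ u - t := by
        have := hdle u t hut₀ htt₀
        rw [abs_of_nonneg (by linarith)] at this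
        rwa [hz, ← dist_eq_norm', dist_comm]
      have hsum : ‖y + z‖ = ‖y‖ + ‖z‖ := by
        have h1 : ‖y + z‖ = 1 := by rw [hyz, hvn]
        have h2 : ‖y + z‖ ≤ ‖y‖ + ‖z‖ := norm_add_le _ _
        have h3 : ‖y‖ + ‖z‖ ≤ 1 := by rw [hyn]; simp only [hu] at hcase ⊢; linarith
        linarith
      have hray : SameRay ℝ y z := sameRay_iff_norm_add.mpr hsum
      have hkey : ‖y‖ • z = ‖z‖ • y := hray.norm_smul_eq
      have : ‖y‖ • v = y := by
        rw [← hyz, smul_add, hkey, ← add_smul, ← hsum, hyz, hvn, one_smul]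
      rw [← hyn, this] at *
      rw [hy] at this
      have := this
      linear_combination (norm := module) this
    · -- u ≤ t
      set z : E n := x t - x u with hz
      have hyz : v + z = x t - a := by simp [hz, hv]
      have hzle : ‖z‖ ≤ t - u := by
        have := hdle t u htt₀ hut₀
        rw [abs_of_nonneg (by linarith)] at this
        rwa [hz, ← dist_eq_norm', dist_comm]
      have hvz : ‖v + z‖ = t - p.1 := by
        rw [hyz, ← dist_eq_norm']; exact key t ht
      have hsum : ‖v + z‖ = ‖v‖ + ‖z‖ := by
        have h2 : ‖v + z‖ ≤ ‖v‖ + ‖z‖ := norm_add_le _ _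
        have h3 : ‖v‖ + ‖z‖ ≤ t - p.1 := by rw [hvn]; simp only [hu] at hzle; linarith
        linarith [hvz]
      have hray : SameRay ℝ v z := sameRay_iff_norm_add.mpr hsum
      have hkey : ‖v‖ • z = ‖z‖ • v := hray.norm_smul_eq
      have hzval : ‖z‖ = t - p.1 - 1 := by
        have := hvz.symm.trans hsum
        rw [hvn] at this; linarith
      have hzv : z = (t - p.1 - 1) • v := by
        rw [← hzval, ← hkey, hvn, one_smul]
      have : x t - a = v + z := hyz.symm
      rw [hzv] at this
      linear_combination (norm := module) this
  intro q hq hcaus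
  obtain ⟨hqt, hqx⟩ := hq
  have hq1 : p.1 ≤ q.1 := by
    have h0 : (0 : ℝ) ≤ dist p.2 q.2 := dist_nonneg
    have := hcaus
    rw [causal] at this
    linarith
  have hq2 : q.2 = p.2 + (q.1 - p.1) • v := by
    rw [hqx, main q.1 hq1, hpx]
  apply Prod.ext
  · simp
  · simpa using hq2

end
end

section
/- Let W be a future-infinite causal worldline in M, let Σ be a slice, and set a = I⁻(W) ∩ Σ. Then a ⊆ closure(I⁻(W)) and edge(a) ⊆ ∂I⁻(W); that is, a is an exterior of the causal horizon ∂I⁻(W). (Part of the paper's Lemma 'GSL implies entropy normal exteriors'.) -/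
open Set Metric

noncomputable section

variable {n : ℕ}

/-- For a worldline `W` and slice `Σ`, `a = I⁻(W) ∩ Σ` is an
exterior of the horizon `∂I⁻(W)`: `a ⊆ closure(I⁻(W))` and `edge(a) ⊆ ∂I⁻(W)`. -/
theorem stmt6 {n : ℕ} (hn : 0 < n) (W Sg : Set (M n))
    (hW : IsWorldline W) (hSg : IsSlice Sg) :
    Iminus W ∩ Sg ⊆ closure (Iminus W) ∧
    edge (Iminus W ∩ Sg) ⊆ frontier (Iminus W) := by
  obtain ⟨hcl, hach, hedge⟩ := hSg
  refine ⟨subset_closure.trans (closure_mono inter_subset_left), ?_⟩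
  intro p hp
  obtain ⟨hpcl, hpO⟩ := hp
  have hpcl' : p ∈ closure (Iminus W) := closure_mono inter_subset_left hpcl
  have hpSg : p ∈ Sg := by
    have := closure_mono (inter_subset_right (s := Iminus W) (t := Sg)) hpcl
    rwa [hcl.closure_eq] at this
  rw [frontier, mem_diff]
  refine ⟨hpcl', fun hint => ?_⟩
  -- p is not in edge Sg
  have hnot : p ∉ edge Sg := by rw [hedge]; exact notMem_empty p
  have hcls : p ∈ closure Sg := subset_closure hpSg
  have hO : ∃ O : Set (M n), IsOpen O ∧ p ∈ O ∧
      ¬ ∃ q ∈ O, ∃ r ∈ O, chron r p ∧ chron p q ∧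
        ∃ γ : ℝ → M n, ContinuousOn γ (Icc 0 1) ∧ γ 0 = r ∧ γ 1 = q ∧
          (∀ s ∈ Icc (0:ℝ) 1, γ s ∈ O ∧ γ s ∉ Sg) ∧
          (∀ s ∈ Icc (0:ℝ) 1, ∀ t ∈ Icc (0:ℝ) 1, s < t → chron (γ s) (γ t)) := by
    by_contra h
    push_neg at h
    exact hnot ⟨hcls, fun O hO hpO => h O hO hpO⟩
  obtain ⟨O, hOopen, hpO', hOno⟩ := hO
  set O' := O ∩ interior (Iminus W) with hO'def
  have hO'open : IsOpen O' := hOopen.inter isOpen_interior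
  have hpO'' : p ∈ O' := ⟨hpO', hint⟩
  obtain ⟨q, hq, r, hr, hrp, hpq, γ, hγc, hγ0, hγ1, hγmem, hγchron⟩ :=
    hpO O' hO'open hpO''
  apply hOno
  refine ⟨q, hq.1, r, hr.1, hrp, hpq, γ, hγc, hγ0, hγ1, fun s hs => ?_, hγchron⟩
  obtain ⟨⟨hOs, hIs⟩, hna⟩ := hγmem s hs
  exact ⟨hOs, fun hSgs => hna ⟨interior_subset hIs, hSgs⟩⟩

end
end

section
/- Let W be a future-infinite causal worldline in M, let Σ be a slice with Σ ⊆ interior(D(Σ)), and set a = I⁻(W) ∩ Σ. Then (∂I⁻(a) \ a) ∩ interior(D(Σ)) ⊆ ∂I⁻(W), where ∂ denotes topological boundary. (The key geometric step in the proof of the paper's Lemma 'GSL implies entropy normal exteriors'.) -/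
open Set Metric

noncomputable section

variable {n : ℕ}

/-!
If `p ≪ w` for a point `w` of the worldline, there is an inextendible causal curve through `p`
that is timelike up to some time `s > p.1` (a straight segment of speed `< 1`) and afterwards
follows the worldline with a small delay, so that all of it lies in `I⁻(W)`. As `p ∈ D(Σ)`, this
curve meets `Σ` at some time `t`. If `t < p.1`, the meeting point lies in the past of points of
`I⁻(a)` near `p`, against achronality of `Σ`; if `t = p.1`, then `p ∈ a`; if `t > p.1`, then
`p ∈ I⁻(a)`, which is open and so misses its frontier. Hence `p ∉ I⁻(W)`, while
`p ∈ closure I⁻(a) ⊆ closure I⁻(W)`.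
-/

open scoped NNReal

theorem causal_of_chron {p q : M n} (h : chron p q) : causal p q := h.le

theorem chron.trans_causal {p q r : M n} (h₁ : chron p q) (h₂ : causal q r) : chron p r := by
  unfold chron causal at *
  linarith [dist_triangle p.2 q.2 r.2]

theorem chron.trans {p q r : M n} (h₁ : chron p q) (h₂ : chron q r) : chron p r :=
  h₁.trans_causal (causal_of_chron h₂)

theorem isOpen_setOf_chron (q : M n) : IsOpen {r : M n | chron q r} :=
  isOpen_lt (continuous_const.dist continuous_snd) (continuous_fst.sub continuous_const)

theorem isOpen_Iminus (S : Set (M n)) : IsOpen (Iminus S) := by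
  have : Iminus S = ⋃ q ∈ S, {r : M n | chron r q} := by ext; simp [Iminus]
  rw [this]
  exact isOpen_biUnion fun q _ ↦
    isOpen_lt (continuous_snd.dist continuous_const) (continuous_const.sub continuous_fst)

theorem mem_Iminus_of_chron {S : Set (M n)} {q r : M n} (h : chron q r) (hr : r ∈ Iminus S) :
    q ∈ Iminus S :=
  let ⟨w, hw, hrw⟩ := hr
  ⟨w, hw, h.trans hrw⟩

theorem Iminus_subset_of_subset_Iminus {S T : Set (M n)} (h : S ⊆ Iminus T) :
    Iminus S ⊆ Iminus T :=
  fun _ ⟨_, hs, hq⟩ ↦ mem_Iminus_of_chron hq (h hs)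

theorem Achronal.notMem_closure_Iminus {S A : Set (M n)} (hS : Achronal S) (hA : A ⊆ S)
    {p q : M n} (hq : q ∈ S) (hqp : chron q p) : p ∉ closure (Iminus A) := by
  intro hp
  obtain ⟨r, hqr, a, ha, hra⟩ := mem_closure_iff.mp hp _ (isOpen_setOf_chron q) hqp
  exact hS q hq a (hA ha) (hqr.trans hra)

theorem LipschitzWith.causal {y : ℝ → E n} (hy : LipschitzWith 1 y) {t t' : ℝ} (h : t ≤ t') :
    causal (t, y t) (t', y t') := by
  have := hy.dist_le_mul t t'
  rw [NNReal.coe_one, one_mul, Real.dist_eq, abs_of_nonpos (by linarith)] at this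
  show dist (y t) (y t') ≤ t' - t
  linarith

theorem LipschitzOnWith.chron {y : ℝ → E n} {K : ℝ≥0} {s : Set ℝ} (hK : K < 1)
    (hy : LipschitzOnWith K y s) {t t' : ℝ} (ht : t ∈ s) (ht' : t' ∈ s) (h : t < t') :
    chron (t, y t) (t', y t') := by
  have hd := hy.dist_le_mul t ht t' ht'
  rw [Real.dist_eq, abs_of_neg (by linarith)] at hd
  have hK' : (K : ℝ) < 1 := hK
  show dist (y t) (y t') < t' - t
  nlinarith

theorem lipschitzWith_of_lipschitzOnWith_Iic_Ici {α : Type*} [PseudoMetricSpace α]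
    {f : ℝ → α} {K : ℝ≥0} {T : ℝ} (h₁ : LipschitzOnWith K f (Iic T))
    (h₂ : LipschitzOnWith K f (Ici T)) : LipschitzWith K f := by
  have key : ∀ s t, s ≤ t → dist (f s) (f t) ≤ K * dist s t := by
    intro s t hst
    rcases le_total t T with htT | hTt
    · exact h₁.dist_le_mul s (hst.trans htT) t htT
    rcases le_total s T with hsT | hTs
    · calc dist (f s) (f t) ≤ dist (f s) (f T) + dist (f T) (f t) := dist_triangle _ _ _
        _ ≤ K * dist s T + K * dist T t :=
          add_le_add (h₁.dist_le_mul s hsT T self_mem_Iic) (h₂.dist_le_mul T self_mem_Ici t hTt)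
        _ = K * dist s t := by
          simp only [Real.dist_eq, abs_of_nonpos (sub_nonpos.mpr hsT),
            abs_of_nonpos (sub_nonpos.mpr hTt), abs_of_nonpos (sub_nonpos.mpr hst)]
          ring
    · exact h₂.dist_le_mul s hTs t hTt
  refine LipschitzWith.of_dist_le_mul fun s t ↦ ?_
  rcases le_total s t with hst | hts
  · exact key s t hst
  · rw [dist_comm, dist_comm s]
    exact key t s hts

theorem exists_lipschitzWith_extension_through {p : M n} {s : ℝ} {f : ℝ → E n}
    (hf : LipschitzOnWith 1 f (Ici s)) (hp : chron p (s, f s)) :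
    ∃ y : ℝ → E n, LipschitzWith 1 y ∧ y p.1 = p.2 ∧ EqOn y f (Ici s) ∧
      ∀ t t', t < t' → t < s → chron (t, y t) (t', y t') := by
  have hps : 0 < s - p.1 := dist_nonneg.trans_lt hp
  set v : ℝ := dist p.2 (f s) / (s - p.1)
  have hv : v.toNNReal < 1 := Real.toNNReal_lt_one.mpr ((div_lt_one hps).mpr hp)
  set g : ℝ → E n := fun t ↦ AffineMap.lineMap p.2 (f s) ((t - p.1) / (s - p.1))
  have hg : LipschitzWith v.toNNReal g := LipschitzWith.of_dist_le' fun t t' ↦ by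
    simp only [g, dist_lineMap_lineMap, Real.dist_eq, ← sub_div, abs_div, abs_of_pos hps,
      sub_sub_sub_cancel_right, v]
    exact (div_mul_comm _ _ _).le
  set y : ℝ → E n := fun t ↦ if t ≤ s then g t else f t
  have hyg : EqOn y g (Iic s) := fun t ht ↦ if_pos ht
  have hyf : EqOn y f (Ici s) := by
    intro t ht
    rcases (mem_Ici.mp ht).eq_or_lt with rfl | hst
    · simp [y, g, div_self hps.ne']
    · exact if_neg (not_le.mpr hst)
  have hy_seg : LipschitzOnWith v.toNNReal y (Iic s) := fun t ht t' ht' ↦ by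
    simpa only [hyg ht, hyg ht'] using hg t t'
  have hy : LipschitzWith 1 y := lipschitzWith_of_lipschitzOnWith_Iic_Ici
    (hy_seg.weaken hv.le) fun t ht t' ht' ↦ by simpa only [hyf ht, hyf ht'] using hf ht ht'
  refine ⟨y, hy, ?_, hyf, fun t t' htt' hts ↦ ?_⟩
  · simp [hyg (show p.1 ∈ Iic s by simp; linarith), g]
  rcases le_total t' s with ht's | hst'
  · exact hy_seg.chron hv hts.le ht's htt'
  · exact (hy_seg.chron hv hts.le self_mem_Iic hts).trans_causal (hy.causal hst')

theorem IsWorldline.exists_lipschitzWith_of_mem_Iminus {W : Set (M n)} (hW : IsWorldline W)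
    {p : M n} (hp : p ∈ Iminus W) :
    ∃ y : ℝ → E n, LipschitzWith 1 y ∧ y p.1 = p.2 ∧ (∀ t, (t, y t) ∈ Iminus W) ∧
      (∀ t < p.1, chron (t, y t) p) ∧ ∀ t, p.1 < t → chron p (t, y t) := by
  obtain ⟨t₀, x, hx, hWeq⟩ := hW
  have hxW : ∀ t, t₀ ≤ t → (t, x t) ∈ W := fun t ht ↦ hWeq ▸ ⟨ht, rfl⟩
  obtain ⟨⟨s, w⟩, hwW, hpw⟩ := hp
  rw [hWeq] at hwW
  obtain ⟨hs : t₀ ≤ s, hw : w = x s⟩ := hwW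
  subst hw
  change dist p.2 (x s) < s - p.1 at hpw
  have hps : p.1 < s := by linarith [dist_nonneg (x := p.2) (y := x s)]
  obtain ⟨ε, hε, hεs⟩ : ∃ ε > 0, dist p.2 (x s) + ε < s - p.1 :=
    ⟨(s - p.1 - dist p.2 (x s)) / 2, by linarith, by linarith⟩
  -- Following `W` with a small delay `ε` keeps the curve strictly inside `I⁻(W)`.
  have hf : LipschitzOnWith 1 (fun t ↦ x (t + ε)) (Ici s) := fun t ht t' ht' ↦ by
    have ht₀ : t₀ ≤ t + ε := by linarith [mem_Ici.mp ht]
    have ht₀' : t₀ ≤ t' + ε := by linarith [mem_Ici.mp ht']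
    simpa only [edist_add_right] using hx ht₀ ht₀'
  have hpf : chron p (s, x (s + ε)) := by
    have := hx.dist_le_mul s hs (s + ε) (show t₀ ≤ s + ε by linarith)
    rw [NNReal.coe_one, one_mul, Real.dist_eq, sub_add_cancel_left, abs_neg, abs_of_pos hε] at this
    show dist p.2 (x (s + ε)) < s - p.1
    linarith [dist_triangle p.2 (x s) (x (s + ε))]
  obtain ⟨y, hy, hyp, hyf, hchron⟩ := exists_lipschitzWith_extension_through hf hpf
  have hyW : ∀ t, s ≤ t → (t, y t) ∈ Iminus W := fun t hst ↦
    ⟨(t + ε, x (t + ε)), hxW _ (by linarith), by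
      show dist (y t) (x (t + ε)) < t + ε - t
      rw [hyf (mem_Ici.mpr hst), dist_self]
      linarith⟩
  refine ⟨y, hy, hyp, fun t ↦ ?_, fun t ht ↦ ?_, fun t ht ↦ ?_⟩
  · rcases le_or_gt s t with hst | hts
    · exact hyW t hst
    · exact mem_Iminus_of_chron (hchron t s hts hts) (hyW s le_rfl)
  · simpa [hyp] using hchron t p.1 ht (ht.trans hps)
  · simpa [hyp] using hchron p.1 t ht hps

theorem IsWorldline.notMem_Iminus_of_mem_frontier {W S : Set (M n)} (hW : IsWorldline W)
    (hS : Achronal S) {p : M n} (hpD : p ∈ Dom S)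
    (hp : p ∈ frontier (Iminus (Iminus W ∩ S))) (hpa : p ∉ Iminus W ∩ S) : p ∉ Iminus W := by
  intro hpW
  rw [(isOpen_Iminus _).frontier_eq] at hp
  obtain ⟨y, hy, hyp, hyW, hpast, hfut⟩ := hW.exists_lipschitzWith_of_mem_Iminus hpW
  obtain ⟨t, ht⟩ := hpD y hy hyp
  rcases lt_trichotomy t p.1 with htp | rfl | hpt
  · exact hS.notMem_closure_Iminus inter_subset_right ht (hpast t htp) hp.1
  · exact hpa ⟨hpW, by simpa [hyp] using ht⟩
  · exact hp.2 ⟨(t, y t), ⟨hyW t, ht⟩, hfut t hpt⟩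

theorem stmt7_general {n : ℕ} (W Sg : Set (M n))
    (hW : IsWorldline W) (hSg : IsSlice Sg) :
    (frontier (Iminus (Iminus W ∩ Sg)) \ (Iminus W ∩ Sg)) ∩ interior (Dom Sg)
      ⊆ frontier (Iminus W) := by
  rintro p ⟨⟨hp, hpa⟩, hpD⟩
  rw [(isOpen_Iminus W).frontier_eq]
  exact ⟨closure_mono (Iminus_subset_of_subset_Iminus inter_subset_left)
      (frontier_subset_closure hp),
    hW.notMem_Iminus_of_mem_frontier hSg.2.1 (interior_subset hpD) hp hpa⟩

/-- With `a = I⁻(W) ∩ Σ` and `Σ ⊆ interior(D(Σ))`,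
`(∂I⁻(a) \\ a) ∩ interior(D(Σ)) ⊆ ∂I⁻(W)`. -/
theorem stmt7 {n : ℕ} (hn : 0 < n) (W Sg : Set (M n))
    (hW : IsWorldline W) (hSg : IsSlice Sg)
    (hD : Sg ⊆ interior (Dom Sg)) :
    (frontier (Iminus (Iminus W ∩ Sg)) \ (Iminus W ∩ Sg)) ∩ interior (Dom Sg)
      ⊆ frontier (Iminus W) :=
  stmt7_general W Sg hW hSg

end
end

section
/- Let Σ ⊆ M be a slice, let a₁, a₂ ⊆ Σ be hypersurfaces, and let p ∈ edge(a₁) with p ∉ closure(I(a₂ \ a₁)). Then p ∈ edge(a₁ ∪ a₂). (First claim of the paper's Lemma 'Locality of entropy normality'.) -/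
open Set Metric

noncomputable section

variable {n : ℕ}

/-- For hypersurfaces `a₁, a₂ ⊆ Σ` and
`p ∈ edge(a₁) \\ closure(I(a₂ \\ a₁))`, we have `p ∈ edge(a₁ ∪ a₂)`. -/
theorem stmt8 {n : ℕ} (hn : 0 < n) (Sg a₁ a₂ : Set (M n))
    (hSg : IsSlice Sg)
    (h1 : IsHypersurfaceIn Sg a₁) (h2 : IsHypersurfaceIn Sg a₂)
    (p : M n) (hp : p ∈ edge a₁)
    (hp' : p ∉ closure (Iboth (a₂ \ a₁))) :
    p ∈ edge (a₁ ∪ a₂) := by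
  obtain ⟨hcl, hedge⟩ := hp
  refine ⟨closure_mono subset_union_left hcl, ?_⟩
  intro O hO hpO
  have hU : IsOpen (closure (Iboth (a₂ \ a₁)))ᶜ := isOpen_compl_iff.2 isClosed_closure
  obtain ⟨q, hq, r, hr, hrp, hpq, γ, hγc, hγ0, hγ1, hmem, hchron⟩ :=
    hedge (O ∩ (closure (Iboth (a₂ \ a₁)))ᶜ) (hO.inter hU) ⟨hpO, hp'⟩
  refine ⟨q, hq.1, r, hr.1, hrp, hpq, γ, hγc, hγ0, hγ1, ?_, hchron⟩
  intro s hs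
  refine ⟨(hmem s hs).1.1, ?_⟩
  rintro (ha1 | ha2)
  · exact (hmem s hs).2 ha1
  · by_cases ha1 : γ s ∈ a₁
    · exact (hmem s hs).2 ha1
    · rcases lt_or_eq_of_le hs.2 with hlt | heq
      · have hI : γ 1 ∈ Iplus (a₂ \ a₁) :=
          ⟨γ s, ⟨ha2, ha1⟩, hchron s hs 1 ⟨zero_le_one, le_refl 1⟩ hlt⟩
        exact hq.2 (subset_closure (Or.inl (hγ1 ▸ hI)))
      · subst heq
        have hI : γ 0 ∈ Iminus (a₂ \ a₁) :=
          ⟨γ 1, ⟨ha2, ha1⟩, hchron 0 ⟨le_refl 0, zero_le_one⟩ 1 hs zero_lt_one⟩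
        exact hr.2 (subset_closure (Or.inr (hγ0 ▸ hI)))

end
end

section
/- Let T : M → ℝ be a continuously differentiable function with timelike gradient, and let h : M → ℝ be continuously differentiable, nonnegative, and compactly supported. Then there exists ε₀ > 0 such that for every ε ∈ [0, ε₀), the function T − εh has timelike gradient; in particular T − εh is a time function, i.e. (T − εh)(p) < (T − εh)(q) whenever p ≼ q and p ≠ q. (The perturbation step in the paper's local timeslice-deformation Lemma.) -/
open Set Metric

noncomputable section

variable {n : ℕ}

/-!
The timelike margin `∂ₜT - ‖∇_E T‖` of a covector is a 2-Lipschitz function of the covector,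
so perturbing `T` by `ε h` lowers the margin of `dT` by at most `2|ε| ‖dh‖`. The margin of `dT`
is continuous and positive, so `‖dh‖ / margin` is continuous with compact support, hence bounded;
its bound gives `ε₀`. A function with timelike gradient increases along every causal
segment `p + t (q - p)`, since its derivative there is at least `(q.1 - p.1)` times the margin.
-/

section Margin

variable {F : Type*} [NormedAddCommGroup F] [NormedSpace ℝ F]

def timelikeMargin (A : ℝ × F →L[ℝ] ℝ) : ℝ :=
  A (1, 0) - ‖A.comp (ContinuousLinearMap.inr ℝ ℝ F)‖

lemma abs_apply_one_zero_le (A : ℝ × F →L[ℝ] ℝ) : |A (1, 0)| ≤ ‖A‖ := by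
  simpa [Prod.norm_def] using A.le_opNorm (1, 0)

lemma norm_comp_inr_le (A : ℝ × F →L[ℝ] ℝ) :
    ‖A.comp (ContinuousLinearMap.inr ℝ ℝ F)‖ ≤ ‖A‖ :=
  (A.opNorm_comp_le _).trans (mul_le_of_le_one_right (norm_nonneg A)
    (ContinuousLinearMap.norm_inr_le_one ℝ ℝ F))

lemma lipschitzWith_timelikeMargin : LipschitzWith 2 (timelikeMargin (F := F)) := by
  refine LipschitzWith.of_le_add_mul 2 fun A B => ?_
  have htime : (A - B) (1, 0) ≤ ‖A - B‖ := (le_abs_self _).trans (abs_apply_one_zero_le _)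
  have hspace : ‖B.comp (ContinuousLinearMap.inr ℝ ℝ F)‖ - ‖A.comp (ContinuousLinearMap.inr ℝ ℝ F)‖
      ≤ ‖A - B‖ :=
    calc _ ≤ ‖B.comp (ContinuousLinearMap.inr ℝ ℝ F) - A.comp (ContinuousLinearMap.inr ℝ ℝ F)‖ :=
          norm_sub_norm_le _ _
      _ = ‖(B - A).comp (ContinuousLinearMap.inr ℝ ℝ F)‖ := by rw [ContinuousLinearMap.sub_comp]
      _ ≤ ‖A - B‖ := norm_sub_rev A B ▸ norm_comp_inr_le _
  simp only [timelikeMargin, sub_apply, dist_eq_norm, NNReal.coe_ofNat] at *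
  linarith

lemma mul_timelikeMargin_le_apply (A : ℝ × F →L[ℝ] ℝ) {v : ℝ × F} (hv : ‖v.2‖ ≤ v.1) :
    v.1 * timelikeMargin A ≤ A v := by
  have hdecomp : A v = v.1 * A (1, 0) + A.comp (ContinuousLinearMap.inr ℝ ℝ F) v.2 := by
    conv_lhs => rw [show v = v.1 • ((1 : ℝ), (0 : F)) + (0, v.2) by ext <;> simp]
    rw [map_add, map_smul, smul_eq_mul]
    rfl
  have hspace : -(‖A.comp (ContinuousLinearMap.inr ℝ ℝ F)‖ * v.1)
      ≤ A.comp (ContinuousLinearMap.inr ℝ ℝ F) v.2 :=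
    calc _ ≤ -(‖A.comp (ContinuousLinearMap.inr ℝ ℝ F)‖ * ‖v.2‖) :=
          neg_le_neg (mul_le_mul_of_nonneg_left hv (norm_nonneg _))
      _ ≤ _ := neg_le_of_abs_le ((A.comp _).le_opNorm v.2)
  rw [hdecomp, timelikeMargin]
  linarith

end Margin

lemma timelikeGrad_iff {T : M n → ℝ} :
    TimelikeGrad T ↔ ∀ p, 0 < timelikeMargin (fderiv ℝ T p) :=
  forall_congr' fun _ => sub_pos.symm

lemma causal.fst_lt_of_ne {p q : M n} (hpq : causal p q) (hne : p ≠ q) : p.1 < q.1 := by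
  refine sub_pos.1 <| (dist_nonneg.trans hpq).lt_of_ne' fun h => hne (Prod.ext (by linarith) ?_)
  exact dist_le_zero.1 (h ▸ hpq)

lemma TimelikeGrad.lt_of_causal {T : M n → ℝ} (hT : Differentiable ℝ T) (hTg : TimelikeGrad T)
    {p q : M n} (hpq : causal p q) (hne : p ≠ q) : T p < T q := by
  set v := q - p
  have hv : ‖v.2‖ ≤ v.1 := by
    simpa only [causal, dist_eq_norm', v, Prod.snd_sub, Prod.fst_sub] using hpq
  have hv₁ : 0 < v.1 := sub_pos.2 (hpq.fst_lt_of_ne hne)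
  have hderiv : ∀ t : ℝ, HasDerivAt (fun t : ℝ => T (p + t • v)) (fderiv ℝ T (p + t • v) v) t :=
    fun t => (hT _).hasFDerivAt.comp_hasDerivAt t
      (((hasDerivAt_id t).smul_const v).const_add p |>.congr_deriv (one_smul ℝ v))
  have hmono : StrictMono fun t : ℝ => T (p + t • v) := strictMono_of_deriv_pos fun t =>
    (hderiv t).deriv ▸ (mul_pos hv₁ ((timelikeGrad_iff.1 hTg) _)).trans_le
      (mul_timelikeMargin_le_apply _ hv)
  simpa [v] using hmono zero_lt_one

lemma HasCompactSupport.exists_pos_forall_mul_lt {X : Type*} [TopologicalSpace X] {g k : X → ℝ}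
    (hg : Continuous g) (hg_pos : ∀ x, 0 < g x) (hk : Continuous k) (hks : HasCompactSupport k) :
    ∃ ε₀ > (0 : ℝ), ∀ ε ∈ Ico (0 : ℝ) ε₀, ∀ x, ε * k x < g x := by
  obtain ⟨C, hC⟩ := (hk.mul (hg.inv₀ fun x => (hg_pos x).ne')).bounded_above_of_compact_support
    hks.mul_right
  refine ⟨(|C| + 1)⁻¹, by positivity, fun ε ⟨hε₀, hε⟩ x => ?_⟩
  have hratio : ε * (k x * (g x)⁻¹) < 1 :=
    calc ε * (k x * (g x)⁻¹) ≤ ε * |C| :=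
          mul_le_mul_of_nonneg_left ((le_abs_self _).trans ((hC x).trans (le_abs_self C))) hε₀
      _ ≤ ε * (|C| + 1) := mul_le_mul_of_nonneg_left (by linarith) hε₀
      _ < 1 := by rwa [← lt_div_iff₀ (by positivity), one_div]
  calc ε * k x = ε * (k x * (g x)⁻¹) * g x := by field_simp [(hg_pos x).ne']
    _ < 1 * g x := mul_lt_mul_of_pos_right hratio (hg_pos x)
    _ = g x := one_mul _

lemma timelikeGrad_sub_mul {T h : M n → ℝ} (hT : Differentiable ℝ T) (hh : Differentiable ℝ h)
    {ε : ℝ} (hε : ∀ p, |ε| * (2 * ‖fderiv ℝ h p‖) < timelikeMargin (fderiv ℝ T p)) :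
    TimelikeGrad fun p => T p - ε * h p := by
  refine timelikeGrad_iff.2 fun p => ?_
  have hderiv : fderiv ℝ (fun p => T p - ε * h p) p = fderiv ℝ T p - ε • fderiv ℝ h p :=
    ((hT p).hasFDerivAt.sub ((hh p).hasFDerivAt.const_smul ε)).fderiv
  have hlip : timelikeMargin (fderiv ℝ T p) - timelikeMargin (fderiv ℝ T p - ε • fderiv ℝ h p)
      ≤ 2 * (|ε| * ‖fderiv ℝ h p‖) := (le_abs_self _).trans <| by
    simpa only [Real.dist_eq, dist_eq_norm, sub_sub_cancel, norm_smul, Real.norm_eq_abs,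
      NNReal.coe_ofNat] using
      lipschitzWith_timelikeMargin.dist_le_mul (fderiv ℝ T p) (fderiv ℝ T p - ε • fderiv ℝ h p)
  rw [hderiv]
  linarith [hε p]

theorem stmt10_general {n : ℕ} (T h : M n → ℝ)
    (hT : ContDiff ℝ 1 T) (hTg : TimelikeGrad T)
    (hh : ContDiff ℝ 1 h) (hsupp : HasCompactSupport h) :
    ∃ ε₀ > (0 : ℝ), ∀ ε : ℝ, ε ∈ Ico (0 : ℝ) ε₀ →
      TimelikeGrad (fun p => T p - ε * h p) ∧
      ∀ p q : M n, causal p q → p ≠ q → T p - ε * h p < T q - ε * h q := by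
  obtain ⟨ε₀, hε₀, hsmall⟩ := HasCompactSupport.exists_pos_forall_mul_lt
    (k := fun p => 2 * ‖fderiv ℝ h p‖)
    ((lipschitzWith_timelikeMargin (F := E n)).continuous.comp (hT.continuous_fderiv one_ne_zero))
    (timelikeGrad_iff.1 hTg) (continuous_const.mul (hh.continuous_fderiv one_ne_zero).norm)
    (hsupp.fderiv (𝕜 := ℝ)).norm.mul_left
  refine ⟨ε₀, hε₀, fun ε hε => ?_⟩
  have hT₁ := hT.differentiable one_ne_zero
  have hh₁ := hh.differentiable one_ne_zero
  have hTε : TimelikeGrad fun p => T p - ε * h p :=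
    timelikeGrad_sub_mul hT₁ hh₁ fun p => by
      simpa only [abs_of_nonneg hε.1, Function.comp_apply] using hsmall ε hε p
  exact ⟨hTε, fun p q => hTε.lt_of_causal (hT₁.sub (hh₁.const_mul ε))⟩

/-- Perturbing a `C¹` function `T` with timelike gradient by a small
multiple of a nonnegative compactly supported `C¹` bump keeps the gradient
timelike; in particular `T - εh` is a time function. -/
theorem stmt10 {n : ℕ} (hn : 0 < n) (T h : M n → ℝ)
    (hT : ContDiff ℝ 1 T) (hTg : TimelikeGrad T)
    (hh : ContDiff ℝ 1 h) (hpos : ∀ p, 0 ≤ h p) (hsupp : HasCompactSupport h) :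
    ∃ ε₀ > (0 : ℝ), ∀ ε : ℝ, ε ∈ Ico (0 : ℝ) ε₀ →
      TimelikeGrad (fun p => T p - ε * h p) ∧
      ∀ p q : M n, causal p q → p ≠ q → T p - ε * h p < T q - ε * h q :=
  stmt10_general T h hT hTg hh hsupp
end
end

section
/- Let Σ_a, Σ_b ⊆ M be closed achronal sets with Σ_b ∩ I⁻(Σ_a) = ∅. Let a ⊆ Σ_a be open in the subspace topology of Σ_a, set a' = Σ_a \ (a ∪ edge(a)), R = J⁺(Σ_a) ∩ J⁻(Σ_b), N = ∂I⁺(a) ∩ R, and b' = Σ_b ∩ D⁺(a' ∪ edge(a)). Then b' ∪ N is achronal. (A step in the proof of the paper's main Theorem, showing the hybrid surface Σ = b' ∪ N is achronal.) -/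
open Set Metric

noncomputable section

variable {n : ℕ}

/- ---------------- Auxiliary lemmas ---------------- -/

lemma chron_time {p q : M n} (h : chron p q) : p.1 < q.1 := by
  have h0 : (0:ℝ) ≤ dist p.2 q.2 := dist_nonneg
  unfold chron at h; linarith

lemma chron_trans {p q r : M n} (h1 : chron p q) (h2 : chron q r) : chron p r := by
  unfold chron at *
  have := dist_triangle p.2 q.2 r.2
  linarith

lemma chron_causal_trans {p q r : M n} (h1 : chron p q) (h2 : causal q r) : chron p r := by
  unfold chron causal at *
  have := dist_triangle p.2 q.2 r.2
  linarith

lemma isOpen_chronTo (q : M n) : IsOpen {p : M n | chron p q} := by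
  have : IsOpen {p : M n | dist p.2 q.2 < q.1 - p.1} :=
    isOpen_lt (continuous_snd.dist continuous_const) (continuous_const.sub continuous_fst)
  exact this

lemma isOpen_Iplus (a : Set (M n)) : IsOpen (Iplus a) := by
  have : Iplus a = ⋃ p ∈ a, {q : M n | chron p q} := by
    ext q; simp [Iplus, mem_iUnion]
  rw [this]
  refine isOpen_biUnion fun p _ => ?_
  exact isOpen_lt (continuous_const.dist continuous_snd) (continuous_fst.sub continuous_const)

lemma push_Iplus {a : Set (M n)} {p q : M n} (hp : p ∈ closure (Iplus a)) (h : chron p q) :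
    q ∈ Iplus a := by
  obtain ⟨p', hp'⟩ := (_root_.mem_closure_iff.mp hp {s | chron s q} (isOpen_chronTo q) h)
  obtain ⟨r, hra, hrp'⟩ := hp'.2
  exact ⟨r, hra, chron_trans hrp' hp'.1⟩

lemma clamp_mono {A B s t : ℝ} (h : s ≤ t) : max A (min s B) ≤ max A (min t B) :=
  max_le_max le_rfl (min_le_min h le_rfl)

lemma clamp_sub {A B s t : ℝ} (h : s ≤ t) : max A (min t B) - max A (min s B) ≤ t - s := by
  have hmin : min t B ≤ min s B + (t - s) := by
    rcases le_total s B with h1 | h1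
    · rw [min_eq_left h1]; calc min t B ≤ t := min_le_left _ _
        _ = s + (t - s) := by ring
    · rw [min_eq_right h1]
      have : min t B ≤ B := min_le_right _ _
      linarith
  have : max A (min t B) ≤ max A (min s B) + (t - s) := by
    apply max_le
    · have : A ≤ max A (min s B) := le_max_left _ _
      linarith
    · have : min s B ≤ max A (min s B) := le_max_right _ _
      linarith
  linarith

lemma clamp_abs {A B s t : ℝ} : |max A (min s B) - max A (min t B)| ≤ |s - t| := by
  rcases le_total s t with h | h
  · rw [abs_sub_comm, abs_of_nonneg (sub_nonneg.2 (clamp_mono h)), abs_sub_comm,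
      abs_of_nonneg (sub_nonneg.2 h)]
    exact clamp_sub h
  · rw [abs_of_nonneg (sub_nonneg.2 (clamp_mono h)), abs_of_nonneg (sub_nonneg.2 h)]
    exact clamp_sub h

lemma min_abs {B s t : ℝ} : |min s B - min t B| ≤ |s - t| := by
  rcases le_total s t with h | h
  · rw [abs_sub_comm, abs_of_nonneg (sub_nonneg.2 (min_le_min h le_rfl)), abs_sub_comm,
      abs_of_nonneg (sub_nonneg.2 h)]
    rcases le_total s B with h1 | h1
    · rw [min_eq_left h1]
      have : min t B ≤ t := min_le_left _ _
      linarith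
    · rw [min_eq_right h1]
      have : min t B ≤ B := min_le_right _ _
      have : B ≤ min t B := le_min (h1.trans h) le_rfl
      linarith [min_le_right t B]
  · rw [abs_of_nonneg (sub_nonneg.2 (min_le_min h le_rfl)), abs_of_nonneg (sub_nonneg.2 h)]
    rcases le_total t B with h1 | h1
    · rw [min_eq_left h1]
      have : min s B ≤ s := min_le_left _ _
      linarith
    · rw [min_eq_right h1]
      have : min s B ≤ B := min_le_right _ _
      linarith

lemma lip_of {x : ℝ → E n} (h : ∀ s t : ℝ, s ≤ t → dist (x s) (x t) ≤ t - s) :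
    LipschitzWith 1 x := by
  apply LipschitzWith.of_dist_le_mul
  intro s t
  rw [NNReal.coe_one, one_mul, Real.dist_eq]
  rcases le_total s t with h1 | h1
  · calc dist (x s) (x t) ≤ t - s := h s t h1
      _ ≤ |s - t| := by rw [abs_sub_comm]; exact le_abs_self _
  · rw [dist_comm]
    calc dist (x t) (x s) ≤ s - t := h t s h1
      _ ≤ |s - t| := le_abs_self _

/-- Key lemma: a point of `I⁺(a)` cannot lie in `D⁺(a' ∪ edge a)`. -/
lemma key_lemma {Sa a : Set (M n)} (hSa : IsClosed Sa) (hSaA : Achronal Sa)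
    (haSub : a ⊆ Sa) (haOpen : IsOpen ((Subtype.val : Sa → M n) ⁻¹' a))
    {q : M n} (hq : q ∈ DomPlus ((Sa \ (a ∪ edge a)) ∪ edge a))
    (hqI : q ∈ Iplus a) : False := by
  have hTsub : ((Sa \ (a ∪ edge a)) ∪ edge a) ⊆ Sa := by
    intro s hs
    rcases hs with hs | hs
    · exact hs.1
    · exact closure_minimal haSub hSa hs.1
  obtain ⟨U, hUopen, hUpre⟩ := isOpen_induced_iff.mp haOpen
  have hUa : ∀ z, z ∈ Sa → (z ∈ U ↔ z ∈ a) := by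
    intro z hz
    have := Set.ext_iff.mp hUpre ⟨z, hz⟩
    simpa using this
  obtain ⟨r, hra, hrq⟩ := hqI
  have hrSa : r ∈ Sa := haSub hra
  obtain ⟨ε, hε, hballU⟩ := Metric.isOpen_iff.mp hUopen r ((hUa r hrSa).mpr hra)
  have hBall : ∀ z, z ∈ Metric.ball r ε → z ∈ Sa → z ∈ a :=
    fun z h1 h2 => (hUa z h2).mp (hballU h1)
  -- Step A : show `r ∈ edge a` using the straight line through `r` and `q`.
  have hΔ : (0:ℝ) < q.1 - r.1 := by
    have h0 : (0:ℝ) ≤ dist r.2 q.2 := dist_nonneg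
    unfold chron at hrq; linarith
  have hv : ‖q.2 - r.2‖ < q.1 - r.1 := by
    rw [show ‖q.2 - r.2‖ = dist q.2 r.2 from (dist_eq_norm _ _).symm, dist_comm]
    exact hrq
  set x₀ : ℝ → E n :=
    fun t => r.2 + (max 0 (min ((t - r.1) / (q.1 - r.1)) 1)) • (q.2 - r.2) with hx₀def
  have hlip₀ : LipschitzWith 1 x₀ := by
    apply lip_of
    intro s t hst
    rw [hx₀def]
    simp only
    rw [dist_add_left, dist_eq_norm, ← sub_smul, norm_smul, Real.norm_eq_abs]
    have h1 : |max 0 (min ((s - r.1) / (q.1 - r.1)) 1) -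
        max 0 (min ((t - r.1) / (q.1 - r.1)) 1)| ≤
        |(s - r.1) / (q.1 - r.1) - (t - r.1) / (q.1 - r.1)| := clamp_abs
    have h2 : |(s - r.1) / (q.1 - r.1) - (t - r.1) / (q.1 - r.1)| = (t - s) / (q.1 - r.1) := by
      rw [div_sub_div_same, show s - r.1 - (t - r.1) = s - t by ring, abs_div,
        abs_of_pos hΔ, abs_of_nonpos (by linarith), neg_sub]
    rw [h2] at h1
    calc _ ≤ ((t - s) / (q.1 - r.1)) * ‖q.2 - r.2‖ :=
          mul_le_mul_of_nonneg_right h1 (norm_nonneg _)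
      _ ≤ ((t - s) / (q.1 - r.1)) * (q.1 - r.1) :=
          mul_le_mul_of_nonneg_left hv.le (div_nonneg (by linarith) hΔ.le)
      _ = t - s := div_mul_cancel₀ _ hΔ.ne'
  have hx₀q : x₀ q.1 = q.2 := by
    rw [hx₀def]
    simp only
    rw [div_self hΔ.ne']
    norm_num
  obtain ⟨t, htq, htT⟩ := hq x₀ hlip₀ hx₀q
  have hsSa : ((t, x₀ t) : M n) ∈ Sa := hTsub htT
  have hredge : r ∈ edge a := by
    rcases lt_trichotomy t r.1 with hlt | heq | hgt
    · exfalso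
      have hneg : (t - r.1) / (q.1 - r.1) < 0 := div_neg_of_neg_of_pos (by linarith) hΔ
      have hc : min ((t - r.1) / (q.1 - r.1)) 1 ≤ 0 := (min_le_left _ _).trans hneg.le
      have hx : x₀ t = r.2 := by
        rw [hx₀def]; simp only
        rw [max_eq_left hc, zero_smul, add_zero]
      have : chron ((t, x₀ t) : M n) r := by
        show dist (x₀ t) r.2 < r.1 - t
        rw [hx, dist_self]; linarith
      exact hSaA _ hsSa r hrSa this
    · have hx : x₀ t = r.2 := by
        rw [hx₀def]; simp only
        rw [heq, sub_self, zero_div, min_eq_left zero_le_one, max_self, zero_smul, add_zero]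
      have : ((t, x₀ t) : M n) = r := by
        rw [hx, heq]
      rw [this] at htT
      rcases htT with h | h
      · exact absurd (Or.inl hra) h.2
      · exact h
    · exfalso
      have hc0 : 0 < (t - r.1) / (q.1 - r.1) := div_pos (by linarith) hΔ
      have hcmax : max 0 (min ((t - r.1) / (q.1 - r.1)) 1) = min ((t - r.1) / (q.1 - r.1)) 1 :=
        max_eq_right (le_min hc0.le zero_le_one)
      have : chron r ((t, x₀ t) : M n) := by
        show dist r.2 (x₀ t) < t - r.1
        rw [hx₀def]; simp only
        rw [hcmax, dist_self_add_right, norm_smul, Real.norm_eq_abs,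
          abs_of_pos (lt_min hc0 one_pos)]
        calc min ((t - r.1) / (q.1 - r.1)) 1 * ‖q.2 - r.2‖
            ≤ ((t - r.1) / (q.1 - r.1)) * ‖q.2 - r.2‖ :=
              mul_le_mul_of_nonneg_right (min_le_left _ _) (norm_nonneg _)
          _ < ((t - r.1) / (q.1 - r.1)) * (q.1 - r.1) :=
              mul_lt_mul_of_pos_left hv hc0
          _ = t - r.1 := div_mul_cancel₀ _ hΔ.ne'
      exact hSaA r hrSa _ hsSa this
  clear htq htT hsSa hlip₀ hx₀q hx₀def
  -- Step B : deform around `r` using the edge curve.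
  obtain ⟨-, hE⟩ := hredge
  obtain ⟨q₁, hq₁O, r₁, hr₁O, hc1, hc2, γ, hγc, hγ0, hγ1, hγmem, hγchr⟩ :=
    hE ({s : M n | chron s q} ∩ Metric.ball r ε)
      ((isOpen_chronTo q).inter Metric.isOpen_ball) ⟨hrq, Metric.mem_ball_self hε⟩
  have hA : r₁.1 < r.1 := chron_time hc1
  have hB : r.1 < q₁.1 := chron_time hc2
  have hAB : r₁.1 < q₁.1 := hA.trans hB
  have hq₁q : chron q₁ q := hq₁O.1
  have hBC : q₁.1 < q.1 := chron_time hq₁q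
  set A := r₁.1 with hAdef
  set Bt := q₁.1 with hBtdef
  have hσ0 : (γ 0).1 = A := by rw [hγ0]
  have hσ1 : (γ 1).1 = Bt := by rw [hγ1]
  have hσcont : ContinuousOn (fun s => (γ s).1) (Icc 0 1) :=
    continuous_fst.comp_continuousOn hγc
  have hσmono : StrictMonoOn (fun s => (γ s).1) (Icc 0 1) := by
    intro s hs t ht hst
    have h := hγchr s hs t ht hst
    have h0 : (0:ℝ) ≤ dist (γ s).2 (γ t).2 := dist_nonneg
    unfold chron at h
    simp only
    linarith
  have hsurj : ∀ u ∈ Icc A Bt, ∃ s ∈ Icc (0:ℝ) 1, (γ s).1 = u := by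
    intro u hu
    have h := intermediate_value_Icc (zero_le_one) hσcont
    rw [hσ0, hσ1] at h
    obtain ⟨s, hs, hval⟩ := h hu
    exact ⟨s, hs, hval⟩
  choose! φ hφmem hφval using hsurj
  have hAmem : A ∈ Icc A Bt := left_mem_Icc.mpr hAB.le
  have hBmem : Bt ∈ Icc A Bt := right_mem_Icc.mpr hAB.le
  have hφA : φ A = 0 := by
    apply hσmono.injOn (hφmem A hAmem) (left_mem_Icc.mpr zero_le_one)
    show (γ (φ A)).1 = (γ 0).1
    rw [hφval A hAmem]; exact hσ0.symm
  have hφB : φ Bt = 1 := by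
    apply hσmono.injOn (hφmem Bt hBmem) (right_mem_Icc.mpr zero_le_one)
    show (γ (φ Bt)).1 = (γ 1).1
    rw [hφval Bt hBmem]; exact hσ1.symm
  have hD : (0:ℝ) < q.1 - Bt := by linarith
  have hw : ‖q.2 - q₁.2‖ < q.1 - Bt := by
    rw [show ‖q.2 - q₁.2‖ = dist q.2 q₁.2 from (dist_eq_norm _ _).symm, dist_comm]
    exact hq₁q
  set x₁ : ℝ → E n := fun t =>
    if t ≤ Bt then (γ (φ (max A (min t Bt)))).2
    else q₁.2 + (min ((t - Bt) / (q.1 - Bt)) 1) • (q.2 - q₁.2) with hx₁def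
  have hx₁Bt : x₁ Bt = q₁.2 := by
    rw [hx₁def]; simp only
    rw [if_pos le_rfl, min_self, max_eq_right hAB.le, hφB, hγ1]
  have hval2 : ∀ u, Bt ≤ u →
      x₁ u = q₁.2 + (min ((u - Bt) / (q.1 - Bt)) 1) • (q.2 - q₁.2) := by
    intro u hu
    rcases eq_or_lt_of_le hu with h | h
    · rw [← h, hx₁Bt, sub_self, zero_div, min_eq_left zero_le_one, zero_smul, add_zero]
    · rw [hx₁def]; simp only
      rw [if_neg (not_le.mpr h)]
  have L1 : ∀ s t : ℝ, s ≤ t → t ≤ Bt → dist (x₁ s) (x₁ t) ≤ t - s := by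
    intro s t hst htB
    have hsB : s ≤ Bt := hst.trans htB
    rw [hx₁def]; simp only
    rw [if_pos hsB, if_pos htB]
    set s' := max A (min s Bt) with hs'def
    set t' := max A (min t Bt) with ht'def
    have hm : s' ≤ t' := clamp_mono hst
    have hs'm : s' ∈ Icc A Bt := ⟨le_max_left _ _, max_le hAB.le (min_le_right _ _)⟩
    have ht'm : t' ∈ Icc A Bt := ⟨le_max_left _ _, max_le hAB.le (min_le_right _ _)⟩
    rcases eq_or_lt_of_le hm with he | hl
    · rw [he, dist_self]; linarith
    · have hφlt : φ s' < φ t' := by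
        rcases lt_trichotomy (φ s') (φ t') with h | h | h
        · exact h
        · exfalso
          have : (γ (φ s')).1 = (γ (φ t')).1 := by rw [h]
          rw [hφval s' hs'm, hφval t' ht'm] at this
          exact hl.ne this
        · exfalso
          have := hσmono (hφmem t' ht'm) (hφmem s' hs'm) h
          simp only at this
          rw [hφval s' hs'm, hφval t' ht'm] at this
          exact absurd hl (not_lt.mpr this.le)
      have hch := hγchr _ (hφmem s' hs'm) _ (hφmem t' ht'm) hφlt
      unfold chron at hch
      rw [hφval s' hs'm, hφval t' ht'm] at hch
      have := clamp_sub (A := A) (B := Bt) hst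
      rw [← hs'def, ← ht'def] at this
      linarith
  have L2 : ∀ s t : ℝ, Bt ≤ s → s ≤ t → dist (x₁ s) (x₁ t) ≤ t - s := by
    intro s t hBs hst
    rw [hval2 s hBs, hval2 t (hBs.trans hst), dist_add_left, dist_eq_norm, ← sub_smul,
      norm_smul, Real.norm_eq_abs]
    have h1 : |min ((s - Bt) / (q.1 - Bt)) 1 - min ((t - Bt) / (q.1 - Bt)) 1| ≤
        |(s - Bt) / (q.1 - Bt) - (t - Bt) / (q.1 - Bt)| := min_abs
    have h2 : |(s - Bt) / (q.1 - Bt) - (t - Bt) / (q.1 - Bt)| = (t - s) / (q.1 - Bt) := by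
      rw [div_sub_div_same, show s - Bt - (t - Bt) = s - t by ring, abs_div,
        abs_of_pos hD, abs_of_nonpos (by linarith), neg_sub]
    rw [h2] at h1
    calc _ ≤ ((t - s) / (q.1 - Bt)) * ‖q.2 - q₁.2‖ :=
          mul_le_mul_of_nonneg_right h1 (norm_nonneg _)
      _ ≤ ((t - s) / (q.1 - Bt)) * (q.1 - Bt) :=
          mul_le_mul_of_nonneg_left hw.le (div_nonneg (by linarith) hD.le)
      _ = t - s := div_mul_cancel₀ _ hD.ne'
  have hlip₁ : LipschitzWith 1 x₁ := by
    apply lip_of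
    intro s t hst
    rcases le_total t Bt with h | h
    · exact L1 s t hst h
    rcases le_total Bt s with h2 | h2
    · exact L2 s t h2 hst
    · calc dist (x₁ s) (x₁ t) ≤ dist (x₁ s) (x₁ Bt) + dist (x₁ Bt) (x₁ t) := dist_triangle _ _ _
        _ ≤ (Bt - s) + (t - Bt) := add_le_add (L1 s Bt h2 le_rfl) (L2 Bt t le_rfl h)
        _ = t - s := by ring
  have hx₁C : x₁ q.1 = q.2 := by
    rw [hval2 q.1 hBC.le, div_self hD.ne', min_self, one_smul, add_sub_cancel]
  obtain ⟨t, htq, htT⟩ := hq x₁ hlip₁ hx₁C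
  have hsSa : ((t, x₁ t) : M n) ∈ Sa := hTsub htT
  rcases lt_or_ge t A with h1 | h1
  · -- before the curve : constant at r₁.2
    have hx : x₁ t = r₁.2 := by
      rw [hx₁def]; simp only
      rw [if_pos (h1.le.trans hAB.le), min_eq_left (h1.le.trans hAB.le), max_eq_left h1.le,
        hφA, hγ0]
    have hcr₁ : chron ((t, x₁ t) : M n) r₁ := by
      show dist (x₁ t) r₁.2 < r₁.1 - t
      rw [hx, dist_self]
      rw [hAdef] at h1
      linarith
    exact hSaA _ hsSa r hrSa (chron_trans hcr₁ hc1)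
  · rcases le_or_gt t Bt with h2 | h2
    · -- on the curve : point of `γ`, avoids `a`, inside the ball
      have hmem : t ∈ Icc A Bt := ⟨h1, h2⟩
      have hx : x₁ t = (γ (φ t)).2 := by
        rw [hx₁def]; simp only
        rw [if_pos h2, min_eq_left h2, max_eq_right h1]
      have heqpt : ((t, x₁ t) : M n) = γ (φ t) := by
        have hfst := hφval t hmem
        exact Prod.ext hfst.symm hx
      have hOm := (hγmem (φ t) (hφmem t hmem)).1
      have hna := (hγmem (φ t) (hφmem t hmem)).2
      rw [heqpt] at hsSa
      exact hna (hBall _ hOm.2 hsSa)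
    · -- after the curve : on the segment from q₁ to q
      have hc : chron q₁ ((t, x₁ t) : M n) := by
        show dist q₁.2 (x₁ t) < t - q₁.1
        rw [hval2 t h2.le, dist_self_add_right, norm_smul, Real.norm_eq_abs]
        have ht0 : 0 < (t - Bt) / (q.1 - Bt) := div_pos (by linarith) hD
        rw [abs_of_pos (lt_min ht0 one_pos)]
        calc min ((t - Bt) / (q.1 - Bt)) 1 * ‖q.2 - q₁.2‖
            ≤ ((t - Bt) / (q.1 - Bt)) * ‖q.2 - q₁.2‖ :=
              mul_le_mul_of_nonneg_right (min_le_left _ _) (norm_nonneg _)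
          _ < ((t - Bt) / (q.1 - Bt)) * (q.1 - Bt) := mul_lt_mul_of_pos_left hw ht0
          _ = t - Bt := div_mul_cancel₀ _ hD.ne'
      exact hSaA r hrSa _ hsSa (chron_trans hc2 hc)

/-- The hybrid surface `b' ∪ N` built from `Σ_a, Σ_b` and
a hypersurface `a ⊆ Σ_a` is achronal. -/
theorem stmt13 {n : ℕ} (hn : 0 < n) (Sa Sb a : Set (M n))
    (hSa : IsClosed Sa) (hSaA : Achronal Sa)
    (hSb : IsClosed Sb) (hSbA : Achronal Sb)
    (hdisj : Sb ∩ Iminus Sa = ∅)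
    (haSub : a ⊆ Sa) (haOpen : IsOpen ((Subtype.val : Sa → M n) ⁻¹' a)) :
    Achronal
      ((Sb ∩ DomPlus ((Sa \ (a ∪ edge a)) ∪ edge a)) ∪
        (frontier (Iplus a) ∩ (Jplus Sa ∩ Jminus Sb))) := by
  intro p hp q hq hpq
  rcases hp with hp | hp <;> rcases hq with hq | hq
  · exact hSbA p hp.1 q hq.1 hpq
  · -- p ∈ b', q ∈ N
    obtain ⟨z, hz, hqz⟩ := hq.2.2
    exact hSbA p hp.1 z hz (chron_causal_trans hpq hqz)
  · -- p ∈ N, q ∈ b'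
    have hqI : q ∈ Iplus a := push_Iplus (frontier_subset_closure hp.1) hpq
    exact key_lemma hSa hSaA haSub haOpen hq.2 hqI
  · -- both in N
    have hqI : q ∈ Iplus a := push_Iplus (frontier_subset_closure hp.1) hpq
    have hq' : q ∉ Iplus a := by
      have hfr := hq.1
      rw [(isOpen_Iplus a).frontier_eq] at hfr
      exact hfr.2
    exact hq' hqI

end
end

section
/- Let Σ_a, Σ_b ⊆ M be closed acausal sets (no two distinct points related by ≼) with D(Σ_a) = D(Σ_b) = M and Σ_b ⊆ Σ_a ∪ I⁺(Σ_a). Let a ⊆ Σ_a be open in the subspace topology of Σ_a, set a' = Σ_a \ (a ∪ edge(a)), and suppose a' ∪ edge(a) is compact. Then b' = Σ_b ∩ D⁺(a' ∪ edge(a)) is compact. (The compactness claim for b' in the proof of the paper's main Theorem.) -/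
open Set Metric

noncomputable section

variable {n : ℕ}

/-- If `a' ∪ edge(a)` is compact then
`b' = Σ_b ∩ D⁺(a' ∪ edge(a))` is compact. -/
theorem stmt15 {n : ℕ} (hn : 0 < n) (Sa Sb a : Set (M n))
    (hSa : IsClosed Sa) (hSaA : Acausal Sa)
    (hSb : IsClosed Sb) (hSbA : Acausal Sb)
    (hDa : Dom Sa = univ) (hDb : Dom Sb = univ)
    (hfut : Sb ⊆ Sa ∪ Iplus Sa)
    (haSub : a ⊆ Sa) (haOpen : IsOpen ((Subtype.val : Sa → M n) ⁻¹' a))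
    (hcomp : IsCompact ((Sa \ (a ∪ edge a)) ∪ edge a)) :
    IsCompact (Sb ∩ DomPlus ((Sa \ (a ∪ edge a)) ∪ edge a)) := by
  classical
  set K : Set (M n) := (Sa \ (a ∪ edge a)) ∪ edge a with hKdef
  rw [Metric.isCompact_iff_isClosed_bounded]
  constructor
  · -- closedness
    apply hSb.inter
    rw [← isSeqClosed_iff_isClosed]
    intro u p hu hup x hx hxp
    -- translated curves through u k
    have hmem : ∀ k : ℕ, ∃ t : ℝ, t ≤ (u k).1 ∧
        (t, x t + ((u k).2 - x (u k).1)) ∈ K := by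
      intro k
      have hxk : LipschitzWith 1 (fun s => x s + ((u k).2 - x (u k).1)) := by
        apply LipschitzWith.of_dist_le_mul
        intro s s'
        rw [dist_add_right]
        exact hx.dist_le_mul s s' 
      exact hu k _ hxk (by simp)
    choose t ht hmemK using hmem
    set y : ℕ → M n := fun k => (t k, x (t k) + ((u k).2 - x (u k).1)) with hy
    obtain ⟨q, hqK, φ, hφmono, hφconv⟩ := hcomp.tendsto_subseq (fun k => hmemK k)
    have hxc : Continuous x := hx.continuous
    have ht1 : Filter.Tendsto (fun k => t (φ k)) Filter.atTop (nhds q.1) :=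
      ((continuous_fst.tendsto q).comp hφconv)
    have ht2 : Filter.Tendsto (fun k => (y (φ k)).2) Filter.atTop (nhds q.2) :=
      ((continuous_snd.tendsto q).comp hφconv)
    have huφ : Filter.Tendsto (fun k => u (φ k)) Filter.atTop (nhds p) :=
      hup.comp hφmono.tendsto_atTop
    have ht2' : Filter.Tendsto (fun k => (y (φ k)).2) Filter.atTop
        (nhds (x q.1 + (p.2 - x p.1))) := by
      apply Filter.Tendsto.add
      · exact (hxc.tendsto q.1).comp ht1
      · exact ((continuous_snd.tendsto p).comp huφ).sub
          (((hxc.tendsto p.1).comp ((continuous_fst.tendsto p).comp huφ)))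
    have hq2 : q.2 = x q.1 := by
      have := tendsto_nhds_unique ht2 ht2'
      rw [this, hxp]; abel
    refine ⟨q.1, ?_, ?_⟩
    · exact le_of_tendsto_of_tendsto ht1 ((continuous_fst.tendsto p).comp huφ)
        (Filter.Eventually.of_forall fun k => ht (φ k))
    · have : (q.1, x q.1) = q := by
        rw [← hq2]
      rw [this]; exact hqK
  · -- boundedness
    obtain ⟨r, hr⟩ := hcomp.isBounded.subset_closedBall (0 : M n)
    set R : ℝ := max r 0 with hR
    have hR0 : 0 ≤ R := le_max_right _ _
    have hRK : ∀ z ∈ K, |z.1| ≤ R ∧ ‖z.2‖ ≤ R := by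
      intro z hz
      have := hr hz
      rw [Metric.mem_closedBall, Prod.dist_eq] at this
      constructor
      · calc |z.1| = dist z.1 (0 : M n).1 := by simp [Real.dist_eq]
          _ ≤ r := le_trans (le_max_left _ _) this
          _ ≤ R := le_max_left _ _
      · calc ‖z.2‖ = dist z.2 (0 : M n).2 := by simp
          _ ≤ r := le_trans (le_max_right _ _) this
          _ ≤ R := le_max_left _ _
    apply Bornology.IsBounded.subset (Metric.isBounded_closedBall (x := (0 : M n)) (r := 3 * R))
    rintro p ⟨-, hp⟩
    -- constant curve
    obtain ⟨t1, ht1le, ht1K⟩ := hp (fun _ => p.2)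
      ((LipschitzWith.const p.2).weaken zero_le_one) rfl
    obtain ⟨h1a, h1b⟩ := hRK _ ht1K
    -- directional curve
    set v : E n := EuclideanSpace.single (⟨0, hn⟩ : Fin n) (1 : ℝ) with hv
    have hvnorm : ‖v‖ = 1 := by
      rw [hv, EuclideanSpace.norm_single]; norm_num
    have hlip : LipschitzWith 1 (fun s : ℝ => p.2 + (p.1 - s) • v) := by
      apply LipschitzWith.of_dist_le_mul
      intro s s'
      have : (p.2 + (p.1 - s) • v) - (p.2 + (p.1 - s') • v) = (s' - s) • v := by
        module
      rw [dist_eq_norm, this, norm_smul, hvnorm, Real.dist_eq]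
      simp [abs_sub_comm]
    obtain ⟨t2, ht2le, ht2K⟩ := hp _ hlip (by simp)
    obtain ⟨h2a, h2b⟩ := hRK _ ht2K
    have hkey : p.1 - t2 ≤ 2 * R := by
      have h1 : p.1 - t2 = ‖(p.1 - t2) • v‖ := by
        rw [norm_smul, hvnorm, mul_one, Real.norm_eq_abs, abs_of_nonneg (by linarith)]
      have h2 : ‖(p.1 - t2) • v‖ ≤ ‖p.2 + (p.1 - t2) • v‖ + ‖p.2‖ := by
        have := norm_sub_le (p.2 + (p.1 - t2) • v) p.2
        simpa using this
      linarith
    have habs2 : |t2| ≤ R := h2a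
    have hub : p.1 ≤ 3 * R := by
      have : t2 ≤ R := le_trans (le_abs_self _) habs2
      linarith
    have hlb : -(3 * R) ≤ p.1 := by
      have : -R ≤ t1 := neg_le_of_abs_le h1a
      linarith
    rw [Metric.mem_closedBall, Prod.dist_eq]
    apply max_le
    · have : dist p.1 (0 : M n).1 = |p.1| := by
        rw [Real.dist_eq]; simp
      rw [this, abs_le]
      exact ⟨hlb, hub⟩
    · have : dist p.2 (0 : M n).2 = ‖p.2‖ := by simp
      rw [this]
      linarith


end
end

section
/- Minkowski spacetime is spatially open: there is no nonempty compact slice, i.e. no nonempty compact closed achronal subset of M with empty edge. Equivalently, every nonempty compact achronal subset of M has nonempty edge. (This verifies the spatial-openness hypothesis of the paper's quoted Minguzzi Proposition for Minkowski spacetime.) -/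
open Set Metric

noncomputable section

variable {n : ℕ}

theorem edge_nonempty_of_compact' {n : ℕ} (hn : 0 < n) (S : Set (M n))
    (hne : S.Nonempty) (hS : IsCompact S) : (edge S).Nonempty := by
  set i : Fin n := ⟨0, hn⟩
  have hcont : Continuous (fun x : M n => (EuclideanSpace.proj i) x.2) :=
    (EuclideanSpace.proj i).continuous.comp continuous_snd
  obtain ⟨p, hpS, hmax⟩ := hS.exists_isMaxOn hne hcont.continuousOn
  refine ⟨p, subset_closure hpS, ?_⟩
  intro O hO hpO
  obtain ⟨ε, hε, hball⟩ := Metric.isOpen_iff.mp hO p hpO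
  set e : E n := EuclideanSpace.single i (1:ℝ) with he
  set d : ℝ := ε/4 with hd
  set δ : ℝ := ε/3 with hδ
  have hd0 : 0 < d := by positivity
  have hδ0 : 0 < δ := by positivity
  have hdδ : d < δ := by rw [hd, hδ]; linarith
  have hδε : δ < ε := by rw [hδ]; linarith
  set v : E n := p.2 + d • e with hv
  have hdv : dist v p.2 = d := by
    rw [hv, dist_self_add_left, norm_smul, Real.norm_eq_abs, abs_of_pos hd0,
      he, EuclideanSpace.norm_single, norm_one, mul_one]
  have hvi : v i = p.2 i + d := by
    simp [hv, he, EuclideanSpace.single_apply]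
  set q : M n := (p.1 + δ, v) with hq
  set r : M n := (p.1 - δ, v) with hr
  have hvO : ∀ t : ℝ, |t - p.1| ≤ δ → ((t, v) : M n) ∈ O := by
    intro t ht
    apply hball
    rw [Metric.mem_ball, Prod.dist_eq]
    apply max_lt
    · simpa [Real.dist_eq] using lt_of_le_of_lt ht hδε
    · simpa [hdv] using lt_trans hdδ hδε
  have hqO : q ∈ O := hvO _ (by
    rw [show p.1 + δ - p.1 = δ by ring, abs_of_pos hδ0])
  have hrO : r ∈ O := hvO _ (by
    rw [show p.1 - δ - p.1 = -δ by ring, abs_neg, abs_of_pos hδ0])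
  refine ⟨q, hqO, r, hrO, ?_, ?_, fun s => (p.1 + (2*s - 1)*δ, v), ?_, ?_, ?_, ?_, ?_⟩
  · show dist r.2 p.2 < p.1 - r.1
    rw [hr]; simpa [hdv] using hdδ
  · show dist p.2 q.2 < q.1 - p.1
    rw [hq]; simp only []
    rw [dist_comm]
    simpa [hdv] using hdδ
  · exact (Continuous.prodMk (by continuity) continuous_const).continuousOn
  · rw [hr, Prod.mk.injEq]; exact ⟨by ring, rfl⟩
  · rw [hq, Prod.mk.injEq]; exact ⟨by ring, rfl⟩
  · intro s hs
    constructor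
    · apply hvO
      rw [add_sub_cancel_left, abs_mul, abs_of_pos hδ0]
      have h1 : |2*s - 1| ≤ 1 := by
        rw [abs_le]; constructor <;> [linarith [hs.1]; linarith [hs.2]]
      nlinarith
    · intro hmem
      have h2 : v i ≤ p.2 i := hmax hmem
      rw [hvi] at h2
      linarith
  · intro s hs t ht hst
    show dist v v < (p.1 + (2*t - 1)*δ) - (p.1 + (2*s - 1)*δ)
    rw [dist_self]
    nlinarith

/-- Minkowski spacetime is spatially open: there is no nonempty
compact slice; equivalently every nonempty compact achronal set has nonempty
edge. -/
theorem stmt17 {n : ℕ} (hn : 0 < n) :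
    (¬ ∃ S : Set (M n), S.Nonempty ∧ IsCompact S ∧ IsSlice S) ∧
    (∀ S : Set (M n), S.Nonempty → IsCompact S → Achronal S → (edge S).Nonempty) := by
  constructor
  · rintro ⟨S, hne, hcomp, hclosed, hach, hedge⟩
    obtain ⟨p, hp⟩ := edge_nonempty_of_compact' hn S hne hcomp
    rw [hedge] at hp
    exact hp
  · intro S hne hcomp _
    exact edge_nonempty_of_compact' hn S hne hcomp

end
end
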